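/- arXiv:0803.0060 — 6 statements merged into one kernel-verified Lean document; each statement's English description precedes it below -/
import Mathlib

section
/- (Almgren's combinatorial lemma) For every Q, n ∈ ℕ there exist α = α(Q,n) > 0 and a finite set Λ = {e₁,...,e_h} of unit vectors in S^{n-1} with the following property: given any set of Q² vectors v₁,...,v_{Q²} ∈ ℝⁿ, there exists e_l ∈ Λ such that |v_k · e_l| ≥ α |v_k| for all k ∈ {1,...,Q²}. -/
open scoped RealInnerProductSpace

private lemma vdm_key {n N : ℕ} (s : Finset (Fin N)) (hs : s.card = n)
    (u : EuclideanSpace ℝ (Fin n)) (hu : u ≠ 0)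
    (h0 : ∀ i ∈ s, ∑ j : Fin n, u j * ((i : ℕ) : ℝ) ^ (j : ℕ) = 0) : False := by
  classical
  let σ := s.orderIsoOfFin hs
  set t : Fin n → ℝ := fun k => (((σ k : Fin N) : ℕ) : ℝ) with ht
  have hinj : Function.Injective t := by
    intro a b hab
    have h1 : ((σ a : Fin N) : ℕ) = ((σ b : Fin N) : ℕ) := Nat.cast_injective hab
    exact σ.injective (Subtype.ext (Fin.val_injective h1))
  have hdet : (Matrix.vandermonde t).det ≠ 0 := Matrix.det_vandermonde_ne_zero_iff.mpr hinj
  have hU : IsUnit (Matrix.vandermonde t) :=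
    (Matrix.isUnit_iff_isUnit_det _).mpr hdet.isUnit
  have hmv : (Matrix.vandermonde t).mulVec (fun j => u j) = 0 := by
    funext k
    have h2 := h0 (σ k : Fin N) (σ k).2
    simpa [Matrix.mulVec, dotProduct, Matrix.vandermonde, ht, mul_comm] using h2
  have hinjmv := Matrix.mulVec_injective_iff_isUnit.mpr hU
  have hz : (fun j => u j) = (0 : Fin n → ℝ) := by
    apply hinjmv
    rw [hmv, Matrix.mulVec_zero]
  exact hu (by ext j; simpa using congrFun hz j)

/-- Almgren's combinatorial lemma: for every `Q, n` there exist `α = α(Q,n) > 0` and a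
finite collection `Λ = {e₁, ..., e_h}` of unit vectors in `ℝⁿ` such that, given any
collection of `Q²` vectors `v₁, ..., v_{Q²} ∈ ℝⁿ`, there is a single direction
`e_l ∈ Λ` with `|v_k ⬝ e_l| ≥ α |v_k|` for all `k`. -/
theorem almgren_combinatorial_lemma (Q n : ℕ) (hn : 0 < n) :
    ∃ α : ℝ, 0 < α ∧
      ∃ (h : ℕ) (e : Fin h → EuclideanSpace ℝ (Fin n)),
        (∀ l, ‖e l‖ = 1) ∧
        ∀ v : Fin (Q ^ 2) → EuclideanSpace ℝ (Fin n),
          ∃ l : Fin h, ∀ k, α * ‖v k‖ ≤ |⟪v k, e l⟫| := by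
  classical
  obtain ⟨j0, hj0⟩ : ∃ j : Fin n, (j : ℕ) = 0 := ⟨⟨0, hn⟩, rfl⟩
  rcases Nat.eq_zero_or_pos Q with hQ | hQ
  · subst hQ
    refine ⟨1, one_pos, 1, fun _ => EuclideanSpace.single j0 1, ?_, ?_⟩
    · intro l; simp [EuclideanSpace.norm_single]
    · intro v
      refine ⟨0, fun k => ?_⟩
      exact absurd k.2 (by simp)
  · set N := Q ^ 2 * (n - 1) + 1 with hNdef
    have hQ2 : 1 ≤ Q ^ 2 := Nat.one_le_pow _ _ hQ
    have hnN : n ≤ N := by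
      have h1 : 1 * (n - 1) ≤ Q ^ 2 * (n - 1) := Nat.mul_le_mul_right _ hQ2
      omega
    set w : Fin N → EuclideanSpace ℝ (Fin n) :=
      fun i => WithLp.toLp 2 (fun j : Fin n => ((i : ℕ) : ℝ) ^ (j : ℕ)) with hwdef
    have hwne : ∀ i, w i ≠ 0 := by
      intro i h
      have h1 : ((i : ℕ) : ℝ) ^ ((j0 : Fin n) : ℕ) = 0 := congrArg (fun x : EuclideanSpace ℝ (Fin n) => x j0) h
      have h2 : ((j0 : Fin n) : ℕ) = 0 := hj0
      rw [h2, pow_zero] at h1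
      exact one_ne_zero h1
    set e : Fin N → EuclideanSpace ℝ (Fin n) := fun i => ‖w i‖⁻¹ • w i with hedef
    have he1 : ∀ i, ‖e i‖ = 1 := by
      intro i
      rw [hedef]
      simp only [norm_smul, norm_inv, norm_norm]
      exact inv_mul_cancel₀ (norm_ne_zero_iff.mpr (hwne i))
    have hip : ∀ (u : EuclideanSpace ℝ (Fin n)) (i : Fin N),
        ⟪u, w i⟫ = ∑ j, u j * ((i : ℕ) : ℝ) ^ (j : ℕ) := by
      intro u i
      simp [PiLp.inner_apply, RCLike.inner_apply, hwdef, PiLp.toLp_apply, starRingEnd_apply, star_trivial, mul_comm]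
    have hkey : ∀ (u : EuclideanSpace ℝ (Fin n)), u ≠ 0 →
        ∀ s : Finset (Fin N), s.card = n → ∃ i ∈ s, ⟪u, e i⟫ ≠ 0 := by
      intro u hu s hs
      by_contra hcon
      push_neg at hcon
      refine vdm_key s hs u hu fun i hi => ?_
      have h2 := hcon i hi
      rw [hedef] at h2
      rw [real_inner_smul_right] at h2
      have h3 : ⟪u, w i⟫ = 0 := by
        rcases mul_eq_zero.mp h2 with h | h
        · exact absurd h (inv_ne_zero (norm_ne_zero_iff.mpr (hwne i)))
        · exact h
      rw [← hip u i]
      exact h3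
    set P : Finset (Finset (Fin N)) := Finset.powersetCard n (Finset.univ) with hPdef
    have hPmem : ∀ s ∈ P, s.card = n := fun s hs => (Finset.mem_powersetCard.mp hs).2
    have hPne : P.attach.Nonempty := by
      rw [Finset.attach_nonempty_iff]
      obtain ⟨s, hsub, hcard⟩ := Finset.exists_subset_card_eq (s := (Finset.univ : Finset (Fin N))) (n := n)
        (by simpa using hnN)
      exact ⟨s, Finset.mem_powersetCard.mpr ⟨hsub, hcard⟩⟩
    have hsne : ∀ s : {x // x ∈ P}, (s : Finset (Fin N)).Nonempty := by
      intro s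
      rw [← Finset.card_pos, hPmem s.1 s.2]
      exact hn
    set f : EuclideanSpace ℝ (Fin n) → ℝ := fun u =>
      P.attach.inf' hPne fun s => (s : Finset (Fin N)).sup' (hsne s) fun i => |⟪u, e i⟫| with hfdef
    have hfc : Continuous f := by
      apply Continuous.finset_inf'_apply hPne
      intro s _
      apply Continuous.finset_sup'_apply (hsne s)
      intro i _
      exact (Continuous.inner continuous_id continuous_const).abs
    obtain ⟨u₀, hu₀, hmin⟩ := (isCompact_sphere (0 : EuclideanSpace ℝ (Fin n)) 1).exists_isMinOn
      ⟨EuclideanSpace.single j0 1, by simp [EuclideanSpace.norm_single]⟩ hfc.continuousOn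
    set α := f u₀ with hα
    have hu₀ne : u₀ ≠ 0 := by
      intro h
      rw [mem_sphere_zero_iff_norm, h, norm_zero] at hu₀
      exact one_ne_zero hu₀.symm
    have hαpos : 0 < α := by
      rw [hα, hfdef]
      rw [Finset.lt_inf'_iff]
      intro s _
      rw [Finset.lt_sup'_iff]
      obtain ⟨i, hi, hne0⟩ := hkey u₀ hu₀ne s.1 (hPmem s.1 s.2)
      exact ⟨i, hi, abs_pos.mpr hne0⟩
    refine ⟨α, hαpos, N, e, he1, ?_⟩
    intro v
    set bad : Fin (Q ^ 2) → Finset (Fin N) :=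
      fun k => Finset.univ.filter fun l => |⟪v k, e l⟫| < α * ‖v k‖ with hbaddef
    have hbad : ∀ k, (bad k).card ≤ n - 1 := by
      intro k
      by_contra hcon
      push_neg at hcon
      have hge : n ≤ (bad k).card := by omega
      obtain ⟨s, hss, hsc⟩ := Finset.exists_subset_card_eq (s := bad k) (n := n) hge
      have hvk : v k ≠ 0 := by
        intro h
        obtain ⟨l, hl⟩ : (bad k).Nonempty := Finset.card_pos.mp (by omega)
        have h2 := (Finset.mem_filter.mp hl).2
        rw [h] at h2
        simp at h2
      set u : EuclideanSpace ℝ (Fin n) := ‖v k‖⁻¹ • v k with hu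
      have hvkn : (0 : ℝ) < ‖v k‖ := norm_pos_iff.mpr hvk
      have hus : u ∈ Metric.sphere (0 : EuclideanSpace ℝ (Fin n)) 1 := by
        rw [mem_sphere_zero_iff_norm, hu, norm_smul, norm_inv, norm_norm]
        exact inv_mul_cancel₀ (ne_of_gt hvkn)
      have hαle : α ≤ f u := hmin hus
      have hsP : s ∈ P := Finset.mem_powersetCard.mpr ⟨Finset.subset_univ s, hsc⟩
      have hfle : f u ≤ s.sup' (hsne ⟨s, hsP⟩) fun i => |⟪u, e i⟫| := by
        rw [hfdef]
        exact Finset.inf'_le _ (Finset.mem_attach _ ⟨s, hsP⟩)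
      have hlt : (s.sup' (hsne ⟨s, hsP⟩) fun i => |⟪u, e i⟫|) < α := by
        rw [Finset.sup'_lt_iff]
        intro i hi
        have h2 := (Finset.mem_filter.mp (hss hi)).2
        have h3 : ⟪u, e i⟫ = ‖v k‖⁻¹ * ⟪v k, e i⟫ := real_inner_smul_left _ _ _
        rw [h3, abs_mul, abs_inv, abs_norm]
        calc ‖v k‖⁻¹ * |⟪v k, e i⟫| < ‖v k‖⁻¹ * (α * ‖v k‖) := by
              exact mul_lt_mul_of_pos_left h2 (inv_pos.mpr hvkn)
          _ = α := by field_simp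
      linarith
    have hcard : (Finset.univ.biUnion bad).card < N := by
      calc (Finset.univ.biUnion bad).card ≤ ∑ k, (bad k).card := Finset.card_biUnion_le
        _ ≤ ∑ _k : Fin (Q ^ 2), (n - 1) := Finset.sum_le_sum fun k _ => hbad k
        _ = Q ^ 2 * (n - 1) := by simp [Finset.sum_const, Finset.card_fin]
        _ < N := by omega
    obtain ⟨l, hl⟩ : ∃ l : Fin N, l ∉ Finset.univ.biUnion bad := by
      by_contra hcon
      push_neg at hcon
      have hsub : (Finset.univ : Finset (Fin N)) ⊆ Finset.univ.biUnion bad :=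
        fun x _ => hcon x
      have h2 := Finset.card_le_card hsub
      rw [Finset.card_fin] at h2
      omega
    refine ⟨l, fun k => ?_⟩
    by_contra hconk
    push_neg at hconk
    exact hl (Finset.mem_biUnion.mpr ⟨k, Finset.mem_univ k,
      Finset.mem_filter.mpr ⟨Finset.mem_univ l, hconk⟩⟩)
end

section
/- (Almgren's biLipschitz embedding) For every Q, n ∈ ℕ there exist N = N(Q,n) and an injective map ξ : A_Q(ℝⁿ) → ℝ^N such that Lip(ξ) ≤ 1 and the inverse of ξ restricted to its image has Lipschitz constant at most C(n,Q). -/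
/-- The Almgren distance between two (representatives of) unordered `Q`-tuples. -/
noncomputable def GDist {n Q : ℕ}
    (P S : Fin Q → EuclideanSpace ℝ (Fin n)) : ℝ :=
  ⨅ σ : Equiv.Perm (Fin Q), Real.sqrt (∑ i, ‖P i - S (σ i)‖ ^ 2)

open Finset

/-- 1-D rearrangement: the sorted matching minimizes the sum of squared differences. -/
lemma sorted_diff_le {Q : ℕ} (a b : Fin Q → ℝ) (σ : Equiv.Perm (Fin Q)) :
    ∑ i, (a (Tuple.sort a i) - b (Tuple.sort b i)) ^ 2 ≤ ∑ i, (a i - b (σ i)) ^ 2 := by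
  have key : ∑ i, a i * b (σ i) ≤ ∑ i, a (Tuple.sort a i) * b (Tuple.sort b i) := by
    set f := a ∘ Tuple.sort a with hf
    set g := b ∘ Tuple.sort b with hg
    have hmono : Monovary f g :=
      (Tuple.monotone_sort a).monovary (Tuple.monotone_sort b)
    have h1 : ∑ i, a i * b (σ i)
        = ∑ i, f i * g (((Tuple.sort b).symm * σ * Tuple.sort a) i) := by
      rw [← Equiv.sum_comp (Tuple.sort a) (fun i => a i * b (σ i))]
      simp [hf, hg, Function.comp]
    rw [h1]
    exact hmono.sum_mul_comp_perm_le_sum_mul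
  have e1 : ∑ i, (a (Tuple.sort a i)) ^ 2 = ∑ i, a i ^ 2 :=
    Equiv.sum_comp (Tuple.sort a) (fun i => a i ^ 2)
  have e2 : ∑ i, (b (Tuple.sort b i)) ^ 2 = ∑ i, b i ^ 2 :=
    Equiv.sum_comp (Tuple.sort b) (fun i => b i ^ 2)
  have e3 : ∑ i, (b (σ i)) ^ 2 = ∑ i, b i ^ 2 :=
    Equiv.sum_comp σ (fun i => b i ^ 2)
  have expand : ∀ (u v : Fin Q → ℝ), ∑ i, (u i - v i) ^ 2
      = ∑ i, u i ^ 2 + ∑ i, v i ^ 2 - 2 * ∑ i, u i * v i := by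
    intro u v
    rw [← Finset.sum_add_distrib, Finset.mul_sum, ← Finset.sum_sub_distrib]
    congr 1; ext i; ring
  rw [expand, expand, e1, e2, e3]
  linarith

open Finset

variable {n : ℕ} {ι : Type} [Fintype ι]

local notation "E" n => EuclideanSpace ℝ (Fin n)

lemma exists_transversal [DecidableEq ι] (hn : 0 < n) (u : ι → EuclideanSpace ℝ (Fin n)) :
    ∃ e : EuclideanSpace ℝ (Fin n), ‖e‖ = 1 ∧
      ∀ k, u k ≠ 0 → (inner ℝ (u k) e : ℝ) ≠ 0 := by
  have : Nontrivial (EuclideanSpace ℝ (Fin n)) := by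
    have : 0 < Module.finrank ℝ (EuclideanSpace ℝ (Fin n)) := by
      simp [finrank_euclideanSpace, hn]
    exact Module.nontrivial_of_finrank_pos this
  set p : Option {k : ι // u k ≠ 0} → Subspace ℝ (EuclideanSpace ℝ (Fin n)) :=
    fun o => Option.rec ⊥ (fun k => (ℝ ∙ u k.1)ᗮ) o with hp
  classical
  haveI : Fintype {k : ι // u k ≠ 0} := Subtype.fintype _
  haveI : Finite (Option {k : ι // u k ≠ 0}) := Finite.of_fintype _
  have hcover : ⋃ o, (p o : Set (EuclideanSpace ℝ (Fin n))) ≠ Set.univ := by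
    intro hc
    obtain ⟨o, ho⟩ := Subspace.exists_eq_top_of_iUnion_eq_univ hc
    match o with
    | none => exact absurd ho bot_ne_top
    | some k =>
      have : u k.1 ∈ p (some k) := ho ▸ Submodule.mem_top
      rw [show p (some k) = (ℝ ∙ u k.1)ᗮ from rfl,
        Submodule.mem_orthogonal_singleton_iff_inner_right] at this
      exact k.2 (inner_self_eq_zero.mp this)
  obtain ⟨e₀, he₀⟩ := Set.ne_univ_iff_exists_notMem _ |>.mp hcover
  simp only [Set.mem_iUnion, not_exists] at he₀
  have hne : e₀ ≠ 0 := by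
    intro h
    exact he₀ none (by simp [hp, h])
  refine ⟨‖e₀‖⁻¹ • e₀, ?_, ?_⟩
  · rw [norm_smul]; simp [norm_ne_zero_iff.mpr hne]
  · intro k hk
    have h1 : (inner ℝ (u k) e₀ : ℝ) ≠ 0 := by
      intro h
      exact he₀ (some ⟨k, hk⟩)
        (by simpa [hp, Submodule.mem_orthogonal_singleton_iff_inner_right] using h)
    rw [real_inner_smul_right]
    exact mul_ne_zero (inv_ne_zero (norm_ne_zero_iff.mpr hne)) h1

lemma exists_directions (hn : 0 < n) (ι : Type) [Fintype ι] :
    ∃ (h : ℕ) (e : Fin h → EuclideanSpace ℝ (Fin n)) (ε : ℝ), 0 < h ∧ 0 < ε ∧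
      (∀ l, ‖e l‖ = 1) ∧
      ∀ u : ι → EuclideanSpace ℝ (Fin n), ∃ l, ∀ k,
        ε * ‖u k‖ ≤ |(inner ℝ (u k) (e l) : ℝ)| := by
  classical
  obtain ⟨estar, hestar, -⟩ := exists_transversal hn (fun _ : ι => (0 : EuclideanSpace ℝ (Fin n)))
  by_cases hι : Nonempty ι
  case neg =>
    exact ⟨1, fun _ => estar, 1, one_pos, one_pos, fun _ => hestar,
      fun u => ⟨0, fun k => absurd ⟨k⟩ hι⟩⟩
  choose F hF1 hF2 using fun u : ι → EuclideanSpace ℝ (Fin n) => exists_transversal hn u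
  set K : Set (ι → EuclideanSpace ℝ (Fin n)) :=
    Set.pi Set.univ (fun _ => Metric.sphere (0 : EuclideanSpace ℝ (Fin n)) 1) with hK
  have hKc : IsCompact K := isCompact_univ_pi fun _ => isCompact_sphere 0 1
  have hKne : K.Nonempty := ⟨fun _ => estar, fun k _ => by simpa using hestar⟩
  set εu : (ι → EuclideanSpace ℝ (Fin n)) → ℝ :=
    fun u => (Finset.univ.inf' (Finset.univ_nonempty) fun k => |(inner ℝ (u k) (F u) : ℝ)|) / 2
    with hεu
  have hεupos : ∀ u ∈ K, 0 < εu u := by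
    intro u hu
    have : ∀ k ∈ Finset.univ, 0 < |(inner ℝ (u k) (F u) : ℝ)| := by
      intro k _
      have huk : u k ≠ 0 := by
        have := hu k (Set.mem_univ k)
        simp only [Metric.mem_sphere, dist_zero_right] at this
        intro h; rw [h] at this; simp at this
      exact abs_pos.mpr (hF2 u k huk)
    have h0 := (Finset.lt_inf'_iff (Finset.univ_nonempty) (f := fun k => |(inner ℝ (u k) (F u) : ℝ)|) (a := 0)).mpr this
    rw [hεu]
    positivity
  set V : (ι → EuclideanSpace ℝ (Fin n)) → Set (ι → EuclideanSpace ℝ (Fin n)) :=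
    fun u => ⋂ k, {v | εu u < |(inner ℝ (v k) (F u) : ℝ)|} with hV
  have hVopen : ∀ u, IsOpen (V u) := by
    intro u
    refine isOpen_iInter_of_finite fun k => ?_
    have hcont : Continuous fun v : ι → EuclideanSpace ℝ (Fin n) =>
        |(inner ℝ (v k) (F u) : ℝ)| :=
      ((continuous_apply k).inner continuous_const).abs
    exact isOpen_lt continuous_const hcont
  have hmemV : ∀ u ∈ K, u ∈ V u := by
    intro u hu
    refine Set.mem_iInter.mpr fun k => ?_
    have h1 : Finset.univ.inf' (Finset.univ_nonempty)
        (fun k => |(inner ℝ (u k) (F u) : ℝ)|) ≤ |(inner ℝ (u k) (F u) : ℝ)| :=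
      Finset.inf'_le _ (Finset.mem_univ k)
    have h2 := hεupos u hu
    simp only [Set.mem_setOf_eq]
    rw [hεu] at h2 ⊢
    linarith
  have hcover : K ⊆ ⋃ u : K, V u.1 :=
    fun u hu => Set.mem_iUnion.mpr ⟨⟨u, hu⟩, hmemV u hu⟩
  obtain ⟨t, ht⟩ := hKc.elim_finite_subcover (fun u : K => V u.1) (fun u => hVopen u.1) hcover
  have htne : t.Nonempty := by
    obtain ⟨u, hu⟩ := hKne
    obtain ⟨w, hwt, -⟩ := Set.mem_iUnion₂.mp (ht hu)
    exact ⟨w, hwt⟩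
  set eqt : {x // x ∈ t} ≃ Fin t.card := t.equivFin with heqt
  refine ⟨t.card, fun l => F ((eqt.symm l).1 : ι → EuclideanSpace ℝ (Fin n)),
    t.inf' htne (fun w => εu w.1), Finset.card_pos.mpr htne, ?_, fun l => hF1 _, ?_⟩
  · rw [Finset.lt_inf'_iff]
    exact fun w hw => hεupos w.1 w.2
  · intro v
    set w : ι → EuclideanSpace ℝ (Fin n) :=
      fun k => if v k = 0 then estar else ‖v k‖⁻¹ • v k with hw
    have hwK : w ∈ K := by
      intro k _
      simp only [Metric.mem_sphere, dist_zero_right, hw]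
      split_ifs with h
      · exact hestar
      · rw [norm_smul]; simp [norm_ne_zero_iff.mpr h]
    obtain ⟨u, hut, huV⟩ := Set.mem_iUnion₂.mp (ht hwK)
    refine ⟨eqt ⟨u, hut⟩, fun k => ?_⟩
    have hVk : εu u.1 < |(inner ℝ (w k) (F u.1) : ℝ)| := by
      have := Set.mem_iInter.mp huV k
      simpa using this
    have hle : t.inf' htne (fun w => εu w.1) ≤ εu u.1 :=
      Finset.inf'_le _ hut
    have hFe : F (((eqt.symm (eqt ⟨u, hut⟩)).1 : {x // x ∈ K}) : ι → EuclideanSpace ℝ (Fin n))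
        = F u.1 := by rw [Equiv.symm_apply_apply]
    simp only []
    rw [hFe]
    by_cases h0 : v k = 0
    · simp [h0]
    · have hwk : w k = ‖v k‖⁻¹ • v k := by simp [hw, h0]
      have hval : |(inner ℝ (w k) (F u.1) : ℝ)| = ‖v k‖⁻¹ * |(inner ℝ (v k) (F u.1) : ℝ)| := by
        rw [hwk, real_inner_smul_left, abs_mul, abs_of_nonneg (by positivity)]
      have hnpos : 0 < ‖v k‖ := norm_pos_iff.mpr h0
      have : εu u.1 * ‖v k‖ < |(inner ℝ (v k) (F u.1) : ℝ)| := by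
        have := mul_lt_mul_of_pos_right hVk hnpos
        rw [hval] at this
        calc εu u.1 * ‖v k‖ < ‖v k‖⁻¹ * |(inner ℝ (v k) (F u.1) : ℝ)| * ‖v k‖ := this
          _ = |(inner ℝ (v k) (F u.1) : ℝ)| := by field_simp
      nlinarith [abs_nonneg (inner ℝ (v k) (F u.1) : ℝ)]

lemma gdist_le {n Q : ℕ} (P S : Fin Q → EuclideanSpace ℝ (Fin n)) (σ : Equiv.Perm (Fin Q)) :
    GDist P S ≤ Real.sqrt (∑ i, ‖P i - S (σ i)‖ ^ 2) := by
  apply ciInf_le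
  exact ⟨0, by rintro x ⟨τ, rfl⟩; exact Real.sqrt_nonneg _⟩

lemma le_gdist {n Q : ℕ} (P S : Fin Q → EuclideanSpace ℝ (Fin n)) (r : ℝ)
    (h : ∀ σ : Equiv.Perm (Fin Q), r ≤ Real.sqrt (∑ i, ‖P i - S (σ i)‖ ^ 2)) :
    r ≤ GDist P S := le_ciInf h

lemma gdist_eq_zero {n Q : ℕ} (P S : Fin Q → EuclideanSpace ℝ (Fin n))
    (h : GDist P S ≤ 0) : ∃ σ : Equiv.Perm (Fin Q), P = S ∘ σ := by
  obtain ⟨σ₀, hσ₀⟩ := Finite.exists_min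
    (fun σ : Equiv.Perm (Fin Q) => Real.sqrt (∑ i, ‖P i - S (σ i)‖ ^ 2))
  have h1 : Real.sqrt (∑ i, ‖P i - S (σ₀ i)‖ ^ 2) ≤ GDist P S := le_gdist _ _ _ hσ₀
  have h2 : Real.sqrt (∑ i, ‖P i - S (σ₀ i)‖ ^ 2) = 0 :=
    le_antisymm (h1.trans h) (Real.sqrt_nonneg _)
  have h3 : ∑ i, ‖P i - S (σ₀ i)‖ ^ 2 = 0 := by
    have hnn : (0:ℝ) ≤ ∑ i, ‖P i - S (σ₀ i)‖ ^ 2 :=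
      Finset.sum_nonneg fun i _ => sq_nonneg _
    nlinarith [Real.sq_sqrt hnn, h2]
  refine ⟨σ₀, funext fun i => ?_⟩
  have := (Finset.sum_eq_zero_iff_of_nonneg (fun i _ => sq_nonneg ‖P i - S (σ₀ i)‖)).mp h3
    i (Finset.mem_univ i)
  have : ‖P i - S (σ₀ i)‖ = 0 := by nlinarith [norm_nonneg (P i - S (σ₀ i))]
  have := norm_eq_zero.mp this
  simpa [sub_eq_zero] using this

/-- Almgren's biLipschitz embedding: there exist `N = N(Q,n)`, a constant `C = C(n,Q)`
and a map `ξ : A_Q(ℝⁿ) → ℝ^N` (given here on representatives, invariant under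
permutations, and injective as a map of unordered tuples) such that `Lip(ξ) ≤ 1` and
`ξ⁻¹` restricted to the image `Q = ξ(A_Q(ℝⁿ))` has Lipschitz constant at most `C`. -/
theorem almgren_bilipschitz_embedding (Q n : ℕ) :
    ∃ (N : ℕ) (C : ℝ) (ξ : (Fin Q → EuclideanSpace ℝ (Fin n)) → EuclideanSpace ℝ (Fin N)),
      0 < C ∧
      (∀ P S : Fin Q → EuclideanSpace ℝ (Fin n),
        (∃ σ : Equiv.Perm (Fin Q), P = S ∘ σ) → ξ P = ξ S) ∧
      (∀ P S : Fin Q → EuclideanSpace ℝ (Fin n),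
        ξ P = ξ S → ∃ σ : Equiv.Perm (Fin Q), P = S ∘ σ) ∧
      (∀ P S : Fin Q → EuclideanSpace ℝ (Fin n), ‖ξ P - ξ S‖ ≤ GDist P S) ∧
      (∀ P S : Fin Q → EuclideanSpace ℝ (Fin n), GDist P S ≤ C * ‖ξ P - ξ S‖) := by
  classical
  rcases Nat.eq_zero_or_pos n with hn | hn
  · -- trivial case `n = 0` : the space is a single point
    subst hn
    have hss : ∀ x y : EuclideanSpace ℝ (Fin 0), x = y := fun x y => by ext i; exact i.elim0
    have hG : ∀ P S : Fin Q → EuclideanSpace ℝ (Fin 0), GDist P S = 0 := by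
      intro P S
      have : ∀ σ : Equiv.Perm (Fin Q),
          Real.sqrt (∑ i, ‖P i - S (σ i)‖ ^ 2) = 0 := by
        intro σ
        have : ∀ i, ‖P i - S (σ i)‖ = 0 := fun i => by rw [hss (P i - S (σ i)) 0]; simp
        simp [this]
      unfold GDist
      simp only [this]
      exact ciInf_const
    refine ⟨0, 1, fun _ => 0, one_pos, fun _ _ _ => rfl, ?_, ?_, ?_⟩
    · exact fun P S _ => ⟨Equiv.refl _, funext fun i => hss _ _⟩
    · intro P S; rw [hG]; simp
    · intro P S; rw [hG]; simp
  · -- main case `n ≥ 1`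
    obtain ⟨h, e, ε, hh, hε, he, hsep⟩ := exists_directions hn (Fin Q × Fin Q)
    set c : ℝ := (Real.sqrt h)⁻¹ with hc
    have hsh : (0:ℝ) < Real.sqrt h := Real.sqrt_pos.mpr (by exact_mod_cast hh)
    have hcpos : 0 < c := inv_pos.mpr hsh
    set a : (Fin Q → EuclideanSpace ℝ (Fin n)) → Fin h → Fin Q → ℝ :=
      fun P l i => inner ℝ (P i) (e l) with ha
    set sV : (Fin Q → ℝ) → Fin Q → ℝ := fun f => f ∘ Tuple.sort f with hsV
    set D2 : (Fin Q → EuclideanSpace ℝ (Fin n)) → (Fin Q → EuclideanSpace ℝ (Fin n)) → ℝ :=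
      fun P S => ∑ l, ∑ i, (sV (a P l) i - sV (a S l) i) ^ 2 with hD2
    set ξ : (Fin Q → EuclideanSpace ℝ (Fin n)) → EuclideanSpace ℝ (Fin (h * Q)) :=
      fun P => WithLp.toLp 2 (fun j => c * sV (a P ((finProdFinEquiv.symm j).1)) ((finProdFinEquiv.symm j).2))
      with hξ
    have norm_xi : ∀ P S, ‖ξ P - ξ S‖ = c * Real.sqrt (D2 P S) := by
      intro P S
      rw [EuclideanSpace.norm_eq]
      have h1 : ∀ j : Fin (h * Q), ‖(ξ P - ξ S) j‖ ^ 2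
          = c ^ 2 * ((fun p : Fin h × Fin Q => (sV (a P p.1) p.2 - sV (a S p.1) p.2) ^ 2)
            (finProdFinEquiv.symm j)) := by
        intro j
        have : (ξ P - ξ S) j = ξ P j - ξ S j := rfl
        rw [this, Real.norm_eq_abs, sq_abs, hξ]
        simp only []
        ring
      have h2 : ∑ j, ‖(ξ P - ξ S) j‖ ^ 2 = c ^ 2 * D2 P S := by
        rw [Finset.sum_congr rfl fun j _ => h1 j, ← Finset.mul_sum]
        congr 1
        rw [Equiv.sum_comp finProdFinEquiv.symm
          (fun p : Fin h × Fin Q => (sV (a P p.1) p.2 - sV (a S p.1) p.2) ^ 2)]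
        rw [hD2, Fintype.sum_prod_type]
      rw [h2, Real.sqrt_mul (sq_nonneg c), Real.sqrt_sq hcpos.le]
    have hD2nonneg : ∀ P S, 0 ≤ D2 P S := fun P S =>
      Finset.sum_nonneg fun l _ => Finset.sum_nonneg fun i _ => sq_nonneg _
    have lower : ∀ P S : Fin Q → EuclideanSpace ℝ (Fin n),
        GDist P S ≤ ε⁻¹ * Real.sqrt h * ‖ξ P - ξ S‖ := by
      intro P S
      obtain ⟨l, hl⟩ := hsep (fun p => P p.1 - S p.2)
      set τ := Tuple.sort (a P l) with hτ
      set ρ := Tuple.sort (a S l) with hρ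
      set σ₀ : Equiv.Perm (Fin Q) := τ.symm.trans ρ with hσ₀
      have key : ∀ i, ε ^ 2 * ‖P (τ i) - S (ρ i)‖ ^ 2 ≤ (sV (a P l) i - sV (a S l) i) ^ 2 := by
        intro i
        have h1 := hl (τ i, ρ i)
        have h2 : sV (a P l) i - sV (a S l) i = inner ℝ (P (τ i) - S (ρ i)) (e l) := by
          have e1 : sV (a P l) i = inner ℝ (P (τ i)) (e l) := rfl
          have e2 : sV (a S l) i = inner ℝ (S (ρ i)) (e l) := rfl
          rw [e1, e2]
          exact (inner_sub_left _ _ _).symm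
        rw [h2]
        have h3 : (0:ℝ) ≤ ε * ‖P (τ i) - S (ρ i)‖ := by positivity
        nlinarith [h1, sq_abs (inner ℝ (P (τ i) - S (ρ i)) (e l) : ℝ),
          abs_nonneg (inner ℝ (P (τ i) - S (ρ i)) (e l) : ℝ)]
      have hsum : ε ^ 2 * ∑ i, ‖P (τ i) - S (ρ i)‖ ^ 2 ≤ ∑ i, (sV (a P l) i - sV (a S l) i) ^ 2 := by
        rw [Finset.mul_sum]
        exact Finset.sum_le_sum fun i _ => key i
      have hreindex : ∑ i, ‖P (τ i) - S (ρ i)‖ ^ 2 = ∑ i, ‖P i - S (σ₀ i)‖ ^ 2 := by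
        rw [← Equiv.sum_comp τ (fun j => ‖P j - S (σ₀ j)‖ ^ 2)]
        apply Finset.sum_congr rfl
        intro i _
        congr 2
        rw [hσ₀]
        simp
      have hD2l : ∑ i, (sV (a P l) i - sV (a S l) i) ^ 2 ≤ D2 P S := by
        rw [hD2]
        exact Finset.single_le_sum (f := fun l => ∑ i, (sV (a P l) i - sV (a S l) i) ^ 2)
          (fun l _ => Finset.sum_nonneg fun i _ => sq_nonneg _) (Finset.mem_univ l)
      have final : ε ^ 2 * ∑ i, ‖P i - S (σ₀ i)‖ ^ 2 ≤ D2 P S := by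
        rw [← hreindex]; exact hsum.trans hD2l
      calc GDist P S ≤ Real.sqrt (∑ i, ‖P i - S (σ₀ i)‖ ^ 2) := gdist_le P S σ₀
        _ ≤ Real.sqrt (ε⁻¹ ^ 2 * D2 P S) := by
            apply Real.sqrt_le_sqrt
            rw [inv_pow]
            have hinv := mul_le_mul_of_nonneg_left final
              (show (0:ℝ) ≤ (ε ^ 2)⁻¹ by positivity)
            rw [← mul_assoc, inv_mul_cancel₀ (show (ε:ℝ) ^ 2 ≠ 0 by positivity), one_mul] at hinv
            exact hinv
        _ = ε⁻¹ * Real.sqrt (D2 P S) := by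
            rw [Real.sqrt_mul (by positivity), Real.sqrt_sq (by positivity)]
        _ = ε⁻¹ * Real.sqrt h * ‖ξ P - ξ S‖ := by
            rw [norm_xi, hc]
            field_simp
    refine ⟨h * Q, ε⁻¹ * Real.sqrt h, ξ, by positivity, ?_, ?_, ?_, fun P S => lower P S⟩
    · -- permutation invariance
      rintro P S ⟨σ, rfl⟩
      have key : ∀ l, sV (a (S ∘ σ) l) = sV (a S l) := by
        intro l
        have h1 : a (S ∘ σ) l = a S l ∘ σ := rfl
        rw [hsV]
        simp only [h1]
        exact Tuple.comp_perm_comp_sort_eq_comp_sort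
      rw [hξ]
      ext j
      simp only [key]
    · -- injectivity
      intro P S hPS
      apply gdist_eq_zero
      have := lower P S
      rw [hPS, sub_self, norm_zero, mul_zero] at this
      exact this
    · -- Lipschitz bound
      intro P S
      apply le_gdist
      intro σ
      rw [norm_xi]
      have step1 : D2 P S ≤ ∑ l, ∑ i, (a P l i - a S l (σ i)) ^ 2 := by
        apply Finset.sum_le_sum
        intro l _
        exact sorted_diff_le (a P l) (a S l) σ
      have step2 : ∀ l i, (a P l i - a S l (σ i)) ^ 2 ≤ ‖P i - S (σ i)‖ ^ 2 := by
        intro l i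
        have h1 : a P l i - a S l (σ i) = inner ℝ (P i - S (σ i)) (e l) := by
          rw [ha]; simp [inner_sub_left]
        rw [h1]
        have h2 := abs_real_inner_le_norm (P i - S (σ i)) (e l)
        rw [he l, mul_one] at h2
        calc (inner ℝ (P i - S (σ i)) (e l) : ℝ) ^ 2
            = |(inner ℝ (P i - S (σ i)) (e l) : ℝ)| ^ 2 := (sq_abs _).symm
          _ ≤ ‖P i - S (σ i)‖ ^ 2 := by nlinarith [abs_nonneg (inner ℝ (P i - S (σ i)) (e l) : ℝ)]
      have step3 : D2 P S ≤ (h : ℝ) * ∑ i, ‖P i - S (σ i)‖ ^ 2 := by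
        calc D2 P S ≤ ∑ l, ∑ i, (a P l i - a S l (σ i)) ^ 2 := step1
          _ ≤ ∑ l : Fin h, ∑ i, ‖P i - S (σ i)‖ ^ 2 :=
            Finset.sum_le_sum fun l _ => Finset.sum_le_sum fun i _ => step2 l i
          _ = (h : ℝ) * ∑ i, ‖P i - S (σ i)‖ ^ 2 := by
            rw [Finset.sum_const, Finset.card_univ, Fintype.card_fin, nsmul_eq_mul]
      calc c * Real.sqrt (D2 P S)
          ≤ c * Real.sqrt ((h : ℝ) * ∑ i, ‖P i - S (σ i)‖ ^ 2) := by
            apply mul_le_mul_of_nonneg_left (Real.sqrt_le_sqrt step3) hcpos.le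
        _ = Real.sqrt (∑ i, ‖P i - S (σ i)‖ ^ 2) := by
            rw [Real.sqrt_mul (Nat.cast_nonneg h), hc]
            field_simp
end

section
/- (Separation lemma) Fix 0 < ε < 1 and set β(ε,Q) = (ε/3)^{3^Q}. For every T ∈ A_Q(ℝⁿ) with finite separation s(T) < +∞, there exists S ∈ A_Q(ℝⁿ) such that β(ε,Q)·d(T) ≤ s(S) < +∞ and G(S,T) ≤ ε·s(S). -/
/-- The diameter `d(T) = maxᵢⱼ |Pᵢ - Pⱼ|` of an unordered `Q`-tuple `T = Σᵢ⟦Pᵢ⟧`. -/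
noncomputable def qDiam {n Q : ℕ} (P : Fin Q → EuclideanSpace ℝ (Fin n)) : ℝ :=
  sSup {r : ℝ | ∃ i j, r = ‖P i - P j‖}

/-- The separation `s(T) = min {|Pᵢ - Pⱼ| : Pᵢ ≠ Pⱼ}` of an unordered `Q`-tuple
(meaningful when the points are not all equal, i.e. when `s(T) < ∞`). -/
noncomputable def qSep {n Q : ℕ} (P : Fin Q → EuclideanSpace ℝ (Fin n)) : ℝ :=
  sInf {r : ℝ | ∃ i j, P i ≠ P j ∧ r = ‖P i - P j‖}

section SepHelpers

open scoped Classical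

variable {n Q : ℕ}

lemma diamSet_finite (P : Fin Q → EuclideanSpace ℝ (Fin n)) :
    {r : ℝ | ∃ i j, r = ‖P i - P j‖}.Finite := by
  have h : {r : ℝ | ∃ i j, r = ‖P i - P j‖} ⊆
      Set.range (fun p : Fin Q × Fin Q => ‖P p.1 - P p.2‖) := by
    rintro r ⟨i, j, rfl⟩; exact ⟨(i, j), rfl⟩
  exact (Set.finite_range _).subset h

lemma sepSet_finite (P : Fin Q → EuclideanSpace ℝ (Fin n)) :
    {r : ℝ | ∃ i j, P i ≠ P j ∧ r = ‖P i - P j‖}.Finite :=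
  (diamSet_finite P).subset (by rintro r ⟨i, j, _, rfl⟩; exact ⟨i, j, rfl⟩)

lemma le_qDiam (P : Fin Q → EuclideanSpace ℝ (Fin n)) (i j : Fin Q) :
    ‖P i - P j‖ ≤ qDiam P :=
  le_csSup (diamSet_finite P).bddAbove ⟨i, j, rfl⟩

lemma qDiam_mem (P : Fin Q → EuclideanSpace ℝ (Fin n)) (i : Fin Q) :
    ∃ p q, qDiam P = ‖P p - P q‖ := by
  have hne : {r : ℝ | ∃ i j, r = ‖P i - P j‖}.Nonempty := ⟨‖P i - P i‖, i, i, rfl⟩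
  exact hne.csSup_mem (diamSet_finite P)

lemma qDiam_nonneg (P : Fin Q → EuclideanSpace ℝ (Fin n)) (i : Fin Q) :
    0 ≤ qDiam P := by
  have := le_qDiam P i i; simpa using this

lemma qSep_le (P : Fin Q → EuclideanSpace ℝ (Fin n)) {i j : Fin Q} (h : P i ≠ P j) :
    qSep P ≤ ‖P i - P j‖ :=
  csInf_le (sepSet_finite P).bddBelow ⟨i, j, h, rfl⟩

lemma qSep_mem (P : Fin Q → EuclideanSpace ℝ (Fin n)) (h : ∃ i j, P i ≠ P j) :
    ∃ i j, P i ≠ P j ∧ qSep P = ‖P i - P j‖ := by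
  obtain ⟨i, j, hij⟩ := h
  have hne : {r : ℝ | ∃ i j, P i ≠ P j ∧ r = ‖P i - P j‖}.Nonempty :=
    ⟨‖P i - P j‖, i, j, hij, rfl⟩
  exact hne.csInf_mem (sepSet_finite P)

lemma qSep_pos (P : Fin Q → EuclideanSpace ℝ (Fin n)) (h : ∃ i j, P i ≠ P j) :
    0 < qSep P := by
  obtain ⟨i, j, hij, heq⟩ := qSep_mem P h
  rw [heq]
  exact norm_sub_pos_iff.mpr hij

lemma GDist_le_id (S T : Fin Q → EuclideanSpace ℝ (Fin n)) :
    GDist S T ≤ Real.sqrt (∑ i, ‖S i - T i‖ ^ 2) := by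
  have hb : BddBelow (Set.range fun σ : Equiv.Perm (Fin Q) =>
      Real.sqrt (∑ i, ‖S i - T (σ i)‖ ^ 2)) :=
    ⟨0, by rintro x ⟨σ, rfl⟩; exact Real.sqrt_nonneg _⟩
  simpa [GDist] using ciInf_le hb (1 : Equiv.Perm (Fin Q))

lemma nat_sq_add_le (Q : ℕ) : Q ^ 2 + Q ≤ 3 ^ Q := by
  induction Q with
  | zero => norm_num
  | succ k ih =>
    rcases Nat.eq_zero_or_pos k with hk | hk
    · subst hk; norm_num
    · have h3 : 3 ^ (k + 1) = 3 * 3 ^ k := by ring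
      nlinarith [ih, hk]

lemma nat_cube_le (Q : ℕ) : 4 * Q ^ 3 ≤ 9 ^ (Q + 1) := by
  have h : Q ^ 3 ≤ 9 ^ Q := by
    induction Q with
    | zero => norm_num
    | succ k ih =>
      rcases Nat.eq_zero_or_pos k with hk | hk
      · subst hk; norm_num
      · have h1 : k + 1 ≤ 2 * k := by omega
        have h2 : (k + 1) ^ 3 ≤ (2 * k) ^ 3 := Nat.pow_le_pow_left h1 3
        have h2' : (2 * k) ^ 3 = 8 * k ^ 3 := by ring
        calc (k + 1) ^ 3 ≤ 8 * k ^ 3 := by rw [← h2']; exact h2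
        _ ≤ 8 * 9 ^ k := Nat.mul_le_mul (le_refl 8) ih
        _ ≤ 9 * 9 ^ k := Nat.mul_le_mul (by norm_num) (le_refl _)
        _ = 9 ^ (k + 1) := by rw [pow_succ]; ring
  calc 4 * Q ^ 3 ≤ 4 * 9 ^ Q := Nat.mul_le_mul (le_refl 4) h
  _ ≤ 9 * 9 ^ Q := Nat.mul_le_mul (by norm_num) (le_refl _)
  _ = 9 ^ (Q + 1) := by rw [pow_succ]; ring

lemma sep_core (ρ : ℝ) (hρ0 : 0 < ρ) (hρ9 : ρ ≤ 1 / 9) :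
    ∀ m : ℕ, ∀ T : Fin Q → EuclideanSpace ℝ (Fin n), (∃ i j, T i ≠ T j) →
      (Finset.image T Finset.univ).card ≤ m →
      ∃ S : Fin Q → EuclideanSpace ℝ (Fin n), (∃ i j, S i ≠ S j) ∧
        ρ ^ m * qDiam T ≤ qSep S ∧ ∀ i, ‖S i - T i‖ ≤ 2 * ρ * m * qSep S := by
  intro m
  induction m with
  | zero =>
    intro T hT hcard
    exfalso
    obtain ⟨i, _, _⟩ := hT
    have : 0 < (Finset.image T Finset.univ).card :=
      Finset.card_pos.mpr ⟨T i, Finset.mem_image_of_mem T (Finset.mem_univ i)⟩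
    omega
  | succ m IH =>
    intro T hT hcard
    have hsep_pos : 0 < qSep T := qSep_pos T hT
    by_cases hc : ρ ^ (m + 1) * qDiam T ≤ qSep T
    · refine ⟨T, hT, hc, fun i => ?_⟩
      simp only [sub_self, norm_zero]
      have h1 : (0:ℝ) ≤ 2 * ρ * (m + 1 : ℕ) := by positivity
      exact mul_nonneg h1 hsep_pos.le
    · push_neg at hc
      obtain ⟨i0, j0, hne, hseq⟩ := qSep_mem T hT
      set T' : Fin Q → EuclideanSpace ℝ (Fin n) :=
        fun i => if T i = T j0 then T i0 else T i with hT'def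
      have hdisp : ∀ i, ‖T' i - T i‖ ≤ qSep T := by
        intro i
        by_cases h : T i = T j0
        · have he : T' i = T i0 := by simp [hT'def, h]
          rw [he, h, ← hseq]
        · have he : T' i = T i := by simp [hT'def, h]
          rw [he]; simpa using hsep_pos.le
      obtain ⟨iw, _, _⟩ := hT
      obtain ⟨p, q, hpq⟩ := qDiam_mem T iw
      have hdpos : 0 < qDiam T := by
        refine lt_of_lt_of_le hsep_pos ?_
        rw [hseq]; exact le_qDiam T i0 j0
      have hρm : ρ ^ (m + 1) ≤ ρ := by
        calc ρ ^ (m + 1) ≤ ρ ^ 1 :=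
              pow_le_pow_of_le_one hρ0.le (by linarith) (by omega)
        _ = ρ := pow_one ρ
      have hfac : (1:ℝ) / 2 ≤ 1 - 2 * ρ ^ (m + 1) := by linarith
      have hkey : (1 - 2 * ρ ^ (m + 1)) * qDiam T ≤ ‖T' p - T' q‖ := by
        have h3 : ‖T p - T q‖ ≤ ‖T p - T' p‖ + ‖T' p - T' q‖ + ‖T' q - T q‖ := by
          calc ‖T p - T q‖ = ‖(T p - T' p) + (T' p - T' q) + (T' q - T q)‖ := by
                congr 1; abel
          _ ≤ _ := norm_add₃_le
        have h4 : ‖T p - T' p‖ ≤ qSep T := by rw [norm_sub_rev]; exact hdisp p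
        have h5 := hdisp q
        nlinarith [hc, hpq, hdpos]
      have hT'pq : T' p ≠ T' q := by
        have h0 : 0 < ‖T' p - T' q‖ := by nlinarith [hkey, hdpos, hfac]
        exact norm_sub_pos_iff.mp h0
      have hcard' : (Finset.image T' Finset.univ).card ≤ m := by
        have hjmem : T j0 ∈ Finset.image T Finset.univ :=
          Finset.mem_image_of_mem T (Finset.mem_univ j0)
        have hsub : Finset.image T' Finset.univ ⊆
            (Finset.image T Finset.univ).erase (T j0) := by
          intro x hx
          simp only [Finset.mem_image, Finset.mem_univ, true_and] at hx
          obtain ⟨a, rfl⟩ := hx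
          by_cases h : T a = T j0
          · have he : T' a = T i0 := by simp [hT'def, h]
            rw [he]
            exact Finset.mem_erase.mpr
              ⟨hne, Finset.mem_image_of_mem T (Finset.mem_univ i0)⟩
          · have he : T' a = T a := by simp [hT'def, h]
            rw [he]
            exact Finset.mem_erase.mpr
              ⟨h, Finset.mem_image_of_mem T (Finset.mem_univ a)⟩
        have hle := Finset.card_le_card hsub
        rw [Finset.card_erase_of_mem hjmem] at hle
        omega
      obtain ⟨S, hSne, hSsep, hSdisp⟩ := IH T' ⟨p, q, hT'pq⟩ hcard'
      have hs_pos : 0 < qSep S := qSep_pos S hSne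
      have hρmn : (0:ℝ) ≤ ρ ^ m := (pow_pos hρ0 m).le
      have hdT' : (1 - 2 * ρ ^ (m + 1)) * qDiam T ≤ qDiam T' :=
        hkey.trans (le_qDiam T' p q)
      have hmain : ρ ^ m * ((1 - 2 * ρ ^ (m + 1)) * qDiam T) ≤ qSep S :=
        le_trans (mul_le_mul_of_nonneg_left hdT' hρmn) hSsep
      have hfac2 : ρ ≤ 1 - 2 * ρ ^ (m + 1) := by linarith
      have hb : ρ ^ (m + 1) * qDiam T ≤ qSep S := by
        have h5 : (0:ℝ) ≤ ρ ^ m * qDiam T := mul_nonneg hρmn hdpos.le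
        calc ρ ^ (m + 1) * qDiam T = ρ * (ρ ^ m * qDiam T) := by rw [pow_succ]; ring
        _ ≤ (1 - 2 * ρ ^ (m + 1)) * (ρ ^ m * qDiam T) :=
              mul_le_mul_of_nonneg_right hfac2 h5
        _ = ρ ^ m * ((1 - 2 * ρ ^ (m + 1)) * qDiam T) := by ring
        _ ≤ qSep S := hmain
      have hextra : ρ ^ (m + 1) * qDiam T ≤ 2 * ρ * qSep S := by
        have hhalf : ρ ^ m * ((1 / 2) * qDiam T) ≤ qSep S := by
          refine le_trans ?_ hmain
          refine mul_le_mul_of_nonneg_left ?_ hρmn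
          exact mul_le_mul_of_nonneg_right hfac hdpos.le
        calc ρ ^ (m + 1) * qDiam T = 2 * ρ * (ρ ^ m * ((1 / 2) * qDiam T)) := by
              rw [pow_succ]; ring
        _ ≤ 2 * ρ * qSep S :=
              mul_le_mul_of_nonneg_left hhalf (by linarith)
      refine ⟨S, hSne, hb, fun i => ?_⟩
      have h6 : ‖S i - T i‖ ≤ ‖S i - T' i‖ + ‖T' i - T i‖ := by
        calc ‖S i - T i‖ = ‖(S i - T' i) + (T' i - T i)‖ := by
              congr 1; abel
        _ ≤ _ := norm_add_le _ _
      have h7 := hSdisp i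
      have h8 := hdisp i
      have h9 : qSep T ≤ 2 * ρ * qSep S := le_trans hc.le hextra
      push_cast
      push_cast at h7
      linarith

end SepHelpers

/-- Separation lemma: fix `0 < ε < 1` and set `β(ε,Q) = (ε/3)^{3^Q}`.  For every
`T ∈ A_Q(ℝⁿ)` with finite separation `s(T) < ∞` (i.e. not all points of `T` coincide),
there exists `S ∈ A_Q(ℝⁿ)`, again with finite separation, such that
`β(ε,Q)·d(T) ≤ s(S)` and `G(S,T) ≤ ε·s(S)`. -/
theorem separation_lemma (n Q : ℕ) (ε : ℝ) (hε0 : 0 < ε) (hε1 : ε < 1)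
    (T : Fin Q → EuclideanSpace ℝ (Fin n)) (hT : ∃ i j, T i ≠ T j) :
    ∃ S : Fin Q → EuclideanSpace ℝ (Fin n),
      (∃ i j, S i ≠ S j) ∧
      (ε / 3) ^ (3 ^ Q) * qDiam T ≤ qSep S ∧
      GDist S T ≤ ε * qSep S := by
  classical
  obtain ⟨i₁, j₁, hij₁⟩ := hT
  have hne' : i₁ ≠ j₁ := fun h => hij₁ (by rw [h])
  have hQ2 : 2 ≤ Q := by
    have h1 := i₁.isLt
    have h2 := j₁.isLt
    have h3 : (i₁ : ℕ) ≠ (j₁ : ℕ) := fun h => hne' (Fin.ext h)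
    omega
  set ρ : ℝ := ε / 3 ^ (Q + 1) with hρdef
  have h3pos : (0:ℝ) < 3 ^ (Q + 1) := by positivity
  have hρ0 : 0 < ρ := div_pos hε0 h3pos
  have h27 : (27:ℝ) ≤ 3 ^ (Q + 1) := by
    calc (27:ℝ) = 3 ^ 3 := by norm_num
    _ ≤ 3 ^ (Q + 1) := pow_le_pow_right₀ (by norm_num) (by omega)
  have hρ9 : ρ ≤ 1 / 9 := by
    rw [hρdef, div_le_iff₀ h3pos]
    nlinarith
  obtain ⟨S, hSne, hSsep, hSdisp⟩ :=
    sep_core ρ hρ0 hρ9 Q T ⟨i₁, j₁, hij₁⟩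
      (le_trans Finset.card_image_le (by simpa using le_refl Q))
  have hD0 : 0 ≤ qDiam T := qDiam_nonneg T i₁
  have ha0 : (0:ℝ) ≤ ε / 3 := by linarith
  have ha3 : ε / 3 ≤ 1 / 3 := by linarith
  have hN1 : Q ^ 2 + Q ≤ 3 ^ Q := nat_sq_add_le Q
  have hQle : Q ≤ 3 ^ Q := by nlinarith [hN1]
  have hβ : (ε / 3) ^ (3 ^ Q) ≤ ρ ^ Q := by
    have hsplit : (ε / 3) ^ (3 ^ Q) = (ε / 3) ^ Q * (ε / 3) ^ (3 ^ Q - Q) := by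
      rw [← pow_add]; congr 1; omega
    have h1 : ρ ^ Q = ε ^ Q / 3 ^ (Q ^ 2 + Q) := by
      rw [hρdef, div_pow, ← pow_mul]
      congr 2
      ring
    have h2 : (ε / 3) ^ Q * (1 / 3 : ℝ) ^ (Q ^ 2) = ε ^ Q / 3 ^ (Q ^ 2 + Q) := by
      rw [div_pow, div_pow, one_pow, div_mul_div_comm, mul_one, ← pow_add]
      congr 2
      ring
    have hρQ : ρ ^ Q = (ε / 3) ^ Q * (1 / 3 : ℝ) ^ (Q ^ 2) := h1.trans h2.symm
    calc (ε / 3) ^ (3 ^ Q) = (ε / 3) ^ Q * (ε / 3) ^ (3 ^ Q - Q) := hsplit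
    _ ≤ (ε / 3) ^ Q * (1 / 3 : ℝ) ^ (3 ^ Q - Q) :=
          mul_le_mul_of_nonneg_left (pow_le_pow_left₀ ha0 ha3 _) (pow_nonneg ha0 Q)
    _ ≤ (ε / 3) ^ Q * (1 / 3 : ℝ) ^ (Q ^ 2) :=
          mul_le_mul_of_nonneg_left
            (pow_le_pow_of_le_one (by norm_num) (by norm_num) (by omega))
            (pow_nonneg ha0 Q)
    _ = ρ ^ Q := hρQ.symm
  refine ⟨S, hSne, le_trans (mul_le_mul_of_nonneg_right hβ hD0) hSsep, ?_⟩
  have hs0 : 0 < qSep S := qSep_pos S hSne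
  have hεs : 0 ≤ ε * qSep S := mul_nonneg hε0.le hs0.le
  have hsum : ∑ i, ‖S i - T i‖ ^ 2 ≤ (Q : ℝ) * (2 * ρ * Q * qSep S) ^ 2 := by
    calc ∑ i, ‖S i - T i‖ ^ 2 ≤ ∑ _i : Fin Q, (2 * ρ * Q * qSep S) ^ 2 := by
          refine Finset.sum_le_sum fun i _ => ?_
          exact pow_le_pow_left₀ (norm_nonneg _) (hSdisp i) 2
    _ = (Q : ℝ) * (2 * ρ * Q * qSep S) ^ 2 := by
          rw [Finset.sum_const, Finset.card_univ, Fintype.card_fin, nsmul_eq_mul]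
  have hQ3 : (4:ℝ) * (Q:ℝ) ^ 3 ≤ 9 ^ (Q + 1) := by exact_mod_cast nat_cube_le Q
  have h39 : ((3:ℝ) ^ (Q + 1)) ^ 2 = 9 ^ (Q + 1) := by
    rw [← pow_mul, mul_comm (Q + 1) 2, pow_mul]; norm_num
  have hρsq : ρ ^ 2 * (9:ℝ) ^ (Q + 1) = ε ^ 2 := by
    rw [hρdef, div_pow, ← h39]
    field_simp
  have hfin : (Q : ℝ) * (2 * ρ * Q * qSep S) ^ 2 ≤ (ε * qSep S) ^ 2 := by
    have e1 : (Q : ℝ) * (2 * ρ * Q * qSep S) ^ 2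
        = (4 * (Q:ℝ) ^ 3) * (ρ ^ 2 * qSep S ^ 2) := by ring
    have e2 : (ε * qSep S) ^ 2 = (9:ℝ) ^ (Q + 1) * (ρ ^ 2 * qSep S ^ 2) := by
      rw [mul_pow, ← hρsq]; ring
    rw [e1, e2]
    exact mul_le_mul_of_nonneg_right hQ3 (by positivity)
  calc GDist S T ≤ Real.sqrt (∑ i, ‖S i - T i‖ ^ 2) := GDist_le_id S T
  _ ≤ Real.sqrt ((ε * qSep S) ^ 2) := Real.sqrt_le_sqrt (hsum.trans hfin)
  _ = ε * qSep S := Real.sqrt_sq hεs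
end

section
/- (Pointwise gradient bound along segments) Let f : B_r ⊂ ℝ^m → A_Q(ℝⁿ) be Lipschitz and fix z ∈ B_r. Then for almost every x ∈ B_r, G(f(x), f(z)) ≤ |x - z| · ∫₀¹ |Df|(z + t(x - z)) dt, where |Df| denotes the a.e.-defined pointwise Lipschitz gradient norm given by sup over a countable dense family {Tᵢ} of |∇ G(f,·Tᵢ)|. -/
open MeasureTheory

/-- The a.e.-defined pointwise gradient norm `|Df|` of a Lipschitz `Q`-valued function,
defined as the supremum, over a countable dense family `{Tᵢ}` in `A_Q(ℝⁿ)`, of the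
(a.e. defined) gradients of the Lipschitz functions `x ↦ G(f(x), Tᵢ)`. -/
noncomputable def qGradNorm {m n Q : ℕ}
    (f : EuclideanSpace ℝ (Fin m) → Fin Q → EuclideanSpace ℝ (Fin n))
    (T : ℕ → Fin Q → EuclideanSpace ℝ (Fin n))
    (x : EuclideanSpace ℝ (Fin m)) : ℝ :=
  ⨆ i : ℕ, ‖fderiv ℝ (fun y => GDist (f y) (T i)) x‖



open Topology Filter
open scoped ENNReal

namespace GBAux


variable {n Q : ℕ}

/-- plain ℓ² distance between tuples -/
noncomputable def D (P S : Fin Q → EuclideanSpace ℝ (Fin n)) : ℝ :=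
  Real.sqrt (∑ i, ‖P i - S i‖ ^ 2)

noncomputable def e (P : Fin Q → EuclideanSpace ℝ (Fin n)) :
    EuclideanSpace ℝ (Fin Q × Fin n) := WithLp.toLp 2 (fun p : Fin Q × Fin n => P p.1 p.2)

lemma D_eq_dist (P S : Fin Q → EuclideanSpace ℝ (Fin n)) : D P S = dist (e P) (e S) := by
  rw [EuclideanSpace.dist_eq, D]
  congr 1
  rw [Fintype.sum_prod_type]
  refine Finset.sum_congr rfl fun i _ => ?_
  rw [EuclideanSpace.norm_eq, Real.sq_sqrt (by positivity)]
  refine Finset.sum_congr rfl fun j _ => ?_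
  simp [e, Real.dist_eq, sq_abs]

lemma D_nonneg (P S : Fin Q → EuclideanSpace ℝ (Fin n)) : 0 ≤ D P S := Real.sqrt_nonneg _

lemma D_self (P : Fin Q → EuclideanSpace ℝ (Fin n)) : D P P = 0 := by
  simp [D]

lemma D_symm (P S : Fin Q → EuclideanSpace ℝ (Fin n)) : D P S = D S P := by
  rw [D_eq_dist, D_eq_dist, dist_comm]

lemma D_triangle (P S R : Fin Q → EuclideanSpace ℝ (Fin n)) : D P R ≤ D P S + D S R := by
  rw [D_eq_dist, D_eq_dist, D_eq_dist]; exact dist_triangle _ _ _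

lemma D_comp_perm (P S : Fin Q → EuclideanSpace ℝ (Fin n)) (σ : Equiv.Perm (Fin Q)) :
    D (P ∘ σ) (S ∘ σ) = D P S := by
  unfold D
  congr 1
  exact Fintype.sum_equiv σ _ _ (fun i => rfl)

lemma GDist_eq_iInf_D (P S : Fin Q → EuclideanSpace ℝ (Fin n)) :
    GDist P S = ⨅ σ : Equiv.Perm (Fin Q), D P (S ∘ σ) := rfl

lemma bdd (P S : Fin Q → EuclideanSpace ℝ (Fin n)) :
    BddBelow (Set.range fun σ : Equiv.Perm (Fin Q) => D P (S ∘ σ)) :=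
  ⟨0, by rintro x ⟨σ, rfl⟩; exact D_nonneg _ _⟩

lemma GDist_le (P S : Fin Q → EuclideanSpace ℝ (Fin n)) (σ : Equiv.Perm (Fin Q)) :
    GDist P S ≤ D P (S ∘ σ) := by
  rw [GDist_eq_iInf_D]; exact ciInf_le (bdd P S) σ

lemma GDist_nonneg (P S : Fin Q → EuclideanSpace ℝ (Fin n)) : 0 ≤ GDist P S := by
  rw [GDist_eq_iInf_D]; exact le_ciInf fun σ => D_nonneg _ _

lemma exists_GDist_eq (P S : Fin Q → EuclideanSpace ℝ (Fin n)) :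
    ∃ σ : Equiv.Perm (Fin Q), GDist P S = D P (S ∘ ⇑σ) := by
  obtain ⟨σ, hσ⟩ := Finite.exists_min fun σ : Equiv.Perm (Fin Q) => D P (S ∘ σ)
  exact ⟨σ, le_antisymm (GDist_le P S σ) (by rw [GDist_eq_iInf_D]; exact le_ciInf hσ)⟩

lemma GDist_self (P : Fin Q → EuclideanSpace ℝ (Fin n)) : GDist P P = 0 := by
  refine le_antisymm ?_ (GDist_nonneg _ _)
  have := GDist_le P P 1
  simpa [D_self] using this

lemma GDist_symm (P S : Fin Q → EuclideanSpace ℝ (Fin n)) : GDist P S = GDist S P := by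
  have key : ∀ A B : Fin Q → EuclideanSpace ℝ (Fin n), GDist A B ≤ GDist B A := by
    intro A B
    obtain ⟨σ, hσ⟩ := exists_GDist_eq B A
    have h1 : GDist A B ≤ D A (B ∘ ⇑(σ⁻¹)) := GDist_le A B σ⁻¹
    have h2 : D A (B ∘ ⇑(σ⁻¹)) = D B (A ∘ σ) := by
      rw [D_symm]
      have := D_comp_perm (B ∘ ⇑(σ⁻¹)) A σ
      rw [← this]
      congr 1
      ext i
      simp
    rw [hσ]; rw [h2] at h1; exact h1
  exact le_antisymm (key P S) (key S P)

lemma GDist_triangle (P S R : Fin Q → EuclideanSpace ℝ (Fin n)) :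
    GDist P R ≤ GDist P S + GDist S R := by
  obtain ⟨σ, hσ⟩ := exists_GDist_eq P S
  obtain ⟨τ, hτ⟩ := exists_GDist_eq S R
  have h1 : GDist P R ≤ D P (R ∘ (σ.trans τ)) := GDist_le P R (σ.trans τ)
  have h2 : D P (R ∘ (σ.trans τ)) ≤ D P (S ∘ σ) + D (S ∘ σ) (R ∘ (σ.trans τ)) :=
    D_triangle _ _ _
  have h3 : D (S ∘ σ) (R ∘ (σ.trans τ)) = D S (R ∘ τ) := by
    have := D_comp_perm S (R ∘ τ) σ
    rw [← this]
    congr 1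
  rw [hσ, hτ]
  calc GDist P R ≤ D P (S ∘ σ) + D (S ∘ σ) (R ∘ (σ.trans τ)) := h1.trans h2
  _ = D P (S ∘ σ) + D S (R ∘ τ) := by rw [h3]

lemma abs_GDist_sub_le (A B T : Fin Q → EuclideanSpace ℝ (Fin n)) :
    |GDist A T - GDist B T| ≤ GDist A B := by
  rw [abs_sub_le_iff]
  constructor
  · have := GDist_triangle A B T; linarith
  · have := GDist_triangle B A T
    rw [GDist_symm B A] at this; linarith



/-- FTC-type inequality for Lipschitz functions with a.e. derivative bound. -/
lemma lip_sub_le_integral {C : NNReal} {h : ℝ → ℝ} (hh : LipschitzWith C h)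
    {q : ℝ → ℝ} (hq : IntegrableOn q (Set.Ioc 0 1) volume)
    (hd : ∀ᵐ t ∂(volume : Measure ℝ), t ∈ Set.Ioo (0:ℝ) 1 →
      ∃ d, HasDerivAt h d t ∧ d ≤ q t) :
    h 1 - h 0 ≤ ∫ t in (0:ℝ)..1, q t := by
  set μ : Measure ℝ := volume.restrict (Set.Ioc 0 1) with hμ
  have hcont : Continuous h := hh.continuous
  set u : ℕ → ℝ → ℝ := fun k t => slope h t (t + 1/(k+1)) with hu
  have hδpos : ∀ k : ℕ, (0:ℝ) < 1/((k:ℝ)+1) := by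
    intro k; positivity
  have hslope : ∀ (k : ℕ) (t : ℝ), u k t = (h (t + 1/((k:ℝ)+1)) - h t) * ((k:ℝ)+1) := by
    intro k t
    rw [hu]
    simp only [slope_def_field]
    rw [add_sub_cancel_left]
    field_simp
  have hbound : ∀ (k : ℕ) (t : ℝ), |u k t| ≤ C := by
    intro k t
    rw [hslope k t, abs_mul, abs_of_pos (show (0:ℝ) < (k:ℝ)+1 by positivity)]
    have hlip := hh.dist_le_mul (t + 1/((k:ℝ)+1)) t
    rw [Real.dist_eq, Real.dist_eq] at hlip
    have habs : |t + 1/((k:ℝ)+1) - t| = 1/((k:ℝ)+1) := by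
      rw [show t + 1/((k:ℝ)+1) - t = 1/((k:ℝ)+1) by ring, abs_of_pos (hδpos k)]
    rw [habs] at hlip
    calc |h (t+1/((k:ℝ)+1)) - h t| * ((k:ℝ)+1) ≤ (C * (1/((k:ℝ)+1))) * ((k:ℝ)+1) :=
          mul_le_mul_of_nonneg_right hlip (by positivity)
    _ = C := by field_simp
  have hone : ∀ᵐ t ∂(volume : Measure ℝ), t ≠ (1:ℝ) := by
    rw [ae_iff]
    have : {a : ℝ | ¬ a ≠ 1} = {1} := by ext a; simp
    rw [this]
    exact measure_singleton 1
  have hae : ∀ᵐ t ∂μ, ∃ d, HasDerivAt h d t ∧ d ≤ q t := by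
    filter_upwards [ae_restrict_of_ae hd, ae_restrict_mem measurableSet_Ioc,
      ae_restrict_of_ae hone] with t h1 h2 h3
    exact h1 ⟨h2.1, lt_of_le_of_ne h2.2 h3⟩
  have hconv : ∀ᵐ t ∂μ, Filter.Tendsto (fun k => u k t) Filter.atTop (𝓝 (deriv h t)) := by
    filter_upwards [hae] with t ht
    obtain ⟨d, hder, _⟩ := ht
    rw [hder.deriv]
    have hslopetendsto := hasDerivAt_iff_tendsto_slope.1 hder
    have hseq : Filter.Tendsto (fun k : ℕ => t + 1/((k:ℝ)+1)) Filter.atTop (𝓝[≠] t) := by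
      apply tendsto_nhdsWithin_of_tendsto_nhds_of_eventually_within
      · have h0 : Filter.Tendsto (fun k : ℕ => 1/((k:ℝ)+1)) Filter.atTop (𝓝 0) :=
          tendsto_one_div_add_atTop_nhds_zero_nat
        have := h0.const_add t
        simpa using this
      · filter_upwards with k
        simp only [Set.mem_compl_iff, Set.mem_singleton_iff]
        have := hδpos k
        intro hcontra
        have : (0:ℝ) < 0 := by nlinarith [congrArg (· - t) hcontra]
        exact lt_irrefl _ this
    exact hslopetendsto.comp hseq
  have hqle : ∀ᵐ t ∂μ, deriv h t ≤ q t := by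
    filter_upwards [hae] with t ht
    obtain ⟨d, hder, hdq⟩ := ht
    rw [hder.deriv]; exact hdq
  have humeas : ∀ k : ℕ, AEStronglyMeasurable (u k) μ := by
    intro k
    apply Continuous.aestronglyMeasurable
    have huk : u k = fun t => (h (t + 1/((k:ℝ)+1)) - h t) * ((k:ℝ)+1) := funext (hslope k)
    rw [huk]
    fun_prop
  have hboundint : Integrable (fun _ : ℝ => (C:ℝ)) μ := integrable_const _
  have hbd : ∀ k : ℕ, ∀ᵐ t ∂μ, ‖u k t‖ ≤ (C:ℝ) := by
    intro k; filter_upwards with t; exact hbound k t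
  have hDCT : Filter.Tendsto (fun k => ∫ t, u k t ∂μ) Filter.atTop
      (𝓝 (∫ t, deriv h t ∂μ)) :=
    tendsto_integral_of_dominated_convergence _ humeas hboundint hbd hconv
  have hgint : Integrable (fun t => deriv h t) μ := by
    refine Integrable.mono' hboundint ((measurable_deriv h).aestronglyMeasurable) ?_
    exact ae_restrict_of_ae (Filter.Eventually.of_forall fun t =>
      norm_deriv_le_of_lipschitz hh)
  have hint : ∀ a b : ℝ, IntervalIntegrable h volume a b := fun a b =>
    hcont.intervalIntegrable a b
  have hcomp : ∀ k : ℕ, ∫ t, u k t ∂μ =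
      ((∫ t in (1:ℝ)..(1+1/((k:ℝ)+1)), h t) - ∫ t in (0:ℝ)..(1/((k:ℝ)+1)), h t) * ((k:ℝ)+1) := by
    intro k
    have e1 : ∫ t, u k t ∂μ = ∫ t in (0:ℝ)..1, u k t := by
      rw [intervalIntegral.integral_of_le (by norm_num)]
    rw [e1]
    have e2 : ∫ t in (0:ℝ)..1, u k t
        = ((∫ t in (0:ℝ)..1, h (t + 1/((k:ℝ)+1))) - ∫ t in (0:ℝ)..1, h t) * ((k:ℝ)+1) := by
      rw [← intervalIntegral.integral_sub
          (Continuous.intervalIntegrable (by fun_prop : Continuous fun t : ℝ => h (t + 1/((k:ℝ)+1))) 0 1)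
          (hint 0 1),
        ← intervalIntegral.integral_mul_const]
      exact intervalIntegral.integral_congr fun t _ => hslope k t
    rw [e2]
    congr 1
    rw [intervalIntegral.integral_comp_add_right]
    have A : (∫ t in (0:ℝ)..(1/((k:ℝ)+1)), h t) + ∫ t in (1/((k:ℝ)+1):ℝ)..1, h t
        = ∫ t in (0:ℝ)..1, h t :=
      intervalIntegral.integral_add_adjacent_intervals (hint _ _) (hint _ _)
    have B : (∫ t in (1/((k:ℝ)+1):ℝ)..1, h t) + ∫ t in (1:ℝ)..(1+1/((k:ℝ)+1)), h t
        = ∫ t in (1/((k:ℝ)+1):ℝ)..(1+1/((k:ℝ)+1)), h t :=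
      intervalIntegral.integral_add_adjacent_intervals (hint _ _) (hint _ _)
    rw [show (0:ℝ)+1/((k:ℝ)+1) = 1/((k:ℝ)+1) by ring, ← B, ← A]
    ring
  have hclose : ∀ k : ℕ, |(∫ t, u k t ∂μ) - (h 1 - h 0)| ≤ 2*C/((k:ℝ)+1) := by
    intro k
    set δ : ℝ := 1/((k:ℝ)+1) with hδ
    have hδp : 0 < δ := hδpos k
    have hδk : δ * ((k:ℝ)+1) = 1 := by rw [hδ]; field_simp
    have key : ∀ a : ℝ, |(∫ t in a..(a+δ), h t) * ((k:ℝ)+1) - h a| ≤ C * δ := by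
      intro a
      have e3 : (∫ t in a..(a+δ), h t) * ((k:ℝ)+1) - h a
          = (∫ t in a..(a+δ), (h t - h a)) * ((k:ℝ)+1) := by
        rw [intervalIntegral.integral_sub (hint _ _) intervalIntegrable_const,
          intervalIntegral.integral_const, show a+δ-a = δ by ring, smul_eq_mul]
        linear_combination (h a) * hδk
      rw [e3, abs_mul, ← Real.norm_eq_abs (∫ t in a..(a+δ), (h t - h a))]
      have e4 : |∫ t in a..(a+δ), (h t - h a)| ≤ (C*δ) * |a+δ - a| := by
        rw [← Real.norm_eq_abs]
        apply intervalIntegral.norm_integral_le_of_norm_le_const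
        intro x hx
        rw [Set.uIoc_of_le (by linarith)] at hx
        have hlx := hh.dist_le_mul x a
        rw [Real.dist_eq, Real.dist_eq] at hlx
        have hxa : |x - a| ≤ δ := by
          rw [abs_le]; constructor
          · linarith [hx.1]
          · linarith [hx.2]
        calc ‖h x - h a‖ = |h x - h a| := rfl
          _ ≤ C * |x - a| := hlx
          _ ≤ C * δ := mul_le_mul_of_nonneg_left hxa C.coe_nonneg
      have e5 : |a + δ - a| = δ := by rw [show a+δ-a = δ by ring, abs_of_pos hδp]
      rw [e5] at e4
      have e6 : |(k:ℝ)+1| = (k:ℝ)+1 := abs_of_pos (by positivity)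
      calc |∫ t in a..(a+δ), (h t - h a)| * |(k:ℝ)+1| ≤ ((C*δ)*δ) * ((k:ℝ)+1) := by
            rw [e6]; exact mul_le_mul_of_nonneg_right e4 (by positivity)
        _ = C * δ * (δ * ((k:ℝ)+1)) := by ring
        _ = C * δ := by rw [hδk]; ring
    rw [hcomp k]
    have h1k := key 1
    have h0k := key 0
    rw [show (0:ℝ)+δ = δ by ring] at h0k
    have hsplit : ((∫ t in (1:ℝ)..(1+δ), h t) - ∫ t in (0:ℝ)..δ, h t) * ((k:ℝ)+1) - (h 1 - h 0)
        = ((∫ t in (1:ℝ)..(1+δ), h t) * ((k:ℝ)+1) - h 1)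
          - ((∫ t in (0:ℝ)..δ, h t) * ((k:ℝ)+1) - h 0) := by ring
    rw [hsplit]
    calc |((∫ t in (1:ℝ)..(1+δ), h t) * ((k:ℝ)+1) - h 1)
          - ((∫ t in (0:ℝ)..δ, h t) * ((k:ℝ)+1) - h 0)|
        ≤ |(∫ t in (1:ℝ)..(1+δ), h t) * ((k:ℝ)+1) - h 1|
          + |(∫ t in (0:ℝ)..δ, h t) * ((k:ℝ)+1) - h 0| := abs_sub _ _
      _ ≤ C * δ + C * δ := add_le_add h1k h0k
      _ = 2*C/((k:ℝ)+1) := by rw [hδ]; ring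
  have hlim2 : Filter.Tendsto (fun k => ∫ t, u k t ∂μ) Filter.atTop (𝓝 (h 1 - h 0)) := by
    rw [← tendsto_sub_nhds_zero_iff]
    apply squeeze_zero_norm hclose
    have h0 : Filter.Tendsto (fun k : ℕ => 1/((k:ℝ)+1)) Filter.atTop (𝓝 0) :=
      tendsto_one_div_add_atTop_nhds_zero_nat
    have := h0.const_mul (2*(C:ℝ))
    simp only [mul_zero] at this
    convert this using 2 with k
    ring
  have heq : h 1 - h 0 = ∫ t, deriv h t ∂μ := tendsto_nhds_unique hlim2 hDCT
  rw [heq, intervalIntegral.integral_of_le (by norm_num : (0:ℝ) ≤ 1)]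
  exact integral_mono_ae hgint hq hqle



variable {m : ℕ}

local notation "E" => EuclideanSpace ℝ (Fin m)

lemma ae_segment_avoids_null (z : E)
    {N : Set E} (hNm : MeasurableSet N) (hN : volume N = 0) :
    ∀ᵐ x : E ∂volume,
      ∀ᵐ t ∂(volume : Measure ℝ), t ∈ Set.Ioo (0:ℝ) 1 → z + t • (x - z) ∉ N := by
  set ψ : E × ℝ → E := fun p => z + p.2 • (p.1 - z) with hψdef
  have hψc : Continuous ψ := by fun_prop
  have hψm : Measurable ψ := hψc.measurable
  set F : E × ℝ → ℝ≥0∞ := fun p => (ψ ⁻¹' N).indicator 1 p with hF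
  have hFm : Measurable F := measurable_one.indicator (hψm hNm)
  set ν : Measure ℝ := volume.restrict (Set.Ioo 0 1) with hν
  have hAm : ∀ t : ℝ, MeasurableSet ((fun x : E => z + t • (x - z)) ⁻¹' N) := by
    intro t
    exact (by fun_prop : Continuous fun x : E => z + t • (x - z)).measurable hNm
  have hslice : ∀ t : ℝ, t ≠ 0 → volume ((fun x : E => z + t • (x - z)) ⁻¹' N) = 0 := by
    intro t ht
    have heq : (fun x : E => z + t • (x - z))
        = (fun y : E => y + (z - t • z)) ∘ (fun x : E => t • x) := by
      funext x
      simp only [Function.comp_apply, smul_sub]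
      abel
    rw [heq, Set.preimage_comp]
    have h1 : volume ((fun y : E => y + (z - t • z)) ⁻¹' N) = 0 := by
      rw [measure_preimage_add_right]
      exact hN
    rw [show (fun x : E => t • x) = (t • ·) from rfl,
      Measure.addHaar_preimage_smul volume ht, h1, mul_zero]
  have key : ∫⁻ x, (∫⁻ t, F (x, t) ∂ν) ∂volume = 0 := by
    have hswap := lintegral_lintegral_swap
      (μ := (volume : Measure E)) (ν := ν)
      (f := fun x t => F (x, t)) hFm.aemeasurable
    rw [hswap]
    have hz : ∀ᵐ t ∂ν, (∫⁻ x, F (x, t) ∂volume) = 0 := by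
      rw [hν, ae_restrict_iff' measurableSet_Ioo]
      filter_upwards with t ht
      have hrepr : (fun x : E => F (x, t))
          = ((fun x : E => z + t • (x - z)) ⁻¹' N).indicator 1 := by
        funext x
        simp only [hF, Set.indicator_apply, Set.mem_preimage, hψdef]
        rfl
      rw [hrepr, lintegral_indicator_one (hAm t), hslice t (ne_of_gt ht.1)]
    calc ∫⁻ t, (∫⁻ x, F (x, t) ∂volume) ∂ν = ∫⁻ _, 0 ∂ν := lintegral_congr_ae hz
    _ = 0 := lintegral_zero
  have hmeas_inner : Measurable fun x : E => ∫⁻ t, F (x, t) ∂ν := by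
    exact hFm.lintegral_prod_right'
  have hae : ∀ᵐ x : E ∂volume, (∫⁻ t, F (x, t) ∂ν) = 0 :=
    (lintegral_eq_zero_iff hmeas_inner).1 key
  filter_upwards [hae] with x hx
  have : ∀ᵐ t ∂ν, F (x, t) = 0 := by
    have hm : Measurable fun t : ℝ => F (x, t) :=
      hFm.comp (by fun_prop : Measurable fun t : ℝ => ((x : E), t))
    exact (lintegral_eq_zero_iff hm).1 hx
  rw [hν, ae_restrict_iff' measurableSet_Ioo] at this
  filter_upwards [this] with t h1 h2
  have := h1 h2
  simp only [hF, Set.indicator_apply, Set.mem_preimage, hψdef] at this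
  intro hcontra
  simp [hcontra] at this


end GBAux

/-- Pointwise gradient bound along segments: if `f : B_r ⊂ ℝᵐ → A_Q(ℝⁿ)` is Lipschitz
and `z ∈ B_r`, then for almost every `x ∈ B_r`,
`G(f(x), f(z)) ≤ |x - z| · ∫₀¹ |Df|(z + t(x - z)) dt`,
where `|Df|` is the pointwise gradient norm relative to a countable dense family
`{Tᵢ} ⊂ A_Q(ℝⁿ)`. -/
theorem gradient_bound_along_segments (m n Q : ℕ) (r : ℝ) (hr : 0 < r)
    (f : EuclideanSpace ℝ (Fin m) → Fin Q → EuclideanSpace ℝ (Fin n))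
    (Lf : ℝ)
    (hLip : ∀ x y, GDist (f x) (f y) ≤ Lf * dist x y)
    (T : ℕ → Fin Q → EuclideanSpace ℝ (Fin n))
    (hdense : ∀ (S : Fin Q → EuclideanSpace ℝ (Fin n)) (ε : ℝ), 0 < ε →
      ∃ i, GDist S (T i) < ε)
    (z : EuclideanSpace ℝ (Fin m)) (hz : z ∈ Metric.ball (0 : EuclideanSpace ℝ (Fin m)) r) :
    ∀ᵐ x ∂(volume.restrict (Metric.ball (0 : EuclideanSpace ℝ (Fin m)) r)),
      GDist (f x) (f z) ≤ ‖x - z‖ * ∫ t in (0:ℝ)..1, qGradNorm f T (z + t • (x - z)) := by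
  set L : NNReal := Lf.toNNReal with hLdef
  set g : ℕ → EuclideanSpace ℝ (Fin m) → ℝ := fun i y => GDist (f y) (T i) with hg
  have hqG : ∀ y, qGradNorm f T y = ⨆ i : ℕ, ‖fderiv ℝ (g i) y‖ := fun y => rfl
  have hL : ∀ x y, GDist (f x) (f y) ≤ L * dist x y := by
    intro x y
    refine (hLip x y).trans (mul_le_mul_of_nonneg_right ?_ dist_nonneg)
    rw [hLdef, Real.coe_toNNReal']
    exact le_max_left _ _
  have hgLip : ∀ i, LipschitzWith L (g i) := by
    intro i
    apply LipschitzWith.of_dist_le_mul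
    intro a b
    rw [Real.dist_eq]
    exact (GBAux.abs_GDist_sub_le (f a) (f b) (T i)).trans (hL a b)
  have hfd : ∀ (i : ℕ) (y : EuclideanSpace ℝ (Fin m)), ‖fderiv ℝ (g i) y‖ ≤ L := fun i y =>
    norm_fderiv_le_of_lipschitz ℝ (hgLip i)
  have hbddA : ∀ y, BddAbove (Set.range fun i : ℕ => ‖fderiv ℝ (g i) y‖) := by
    intro y
    exact ⟨L, by rintro v ⟨i, rfl⟩; exact hfd i y⟩
  have hq_le_L : ∀ y, qGradNorm f T y ≤ L := by
    intro y; rw [hqG]; exact ciSup_le fun i => hfd i y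
  have hq_ge : ∀ (i : ℕ) y, ‖fderiv ℝ (g i) y‖ ≤ qGradNorm f T y := by
    intro i y; rw [hqG]; exact le_ciSup (hbddA y) i
  have hq_nonneg : ∀ y, 0 ≤ qGradNorm f T y := fun y =>
    (norm_nonneg _).trans (hq_ge 0 y)
  have hqm : Measurable (qGradNorm f T) := by
    have : Measurable fun y => ⨆ i : ℕ, ‖fderiv ℝ (g i) y‖ :=
      Measurable.iSup fun i => (measurable_fderiv ℝ (g i)).norm
    exact this
  -- the bad set
  set N : Set (EuclideanSpace ℝ (Fin m)) :=
    ⋃ i : ℕ, {y | ¬ DifferentiableAt ℝ (g i) y} with hN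
  have hNm : MeasurableSet N :=
    MeasurableSet.iUnion fun i => (measurableSet_of_differentiableAt ℝ (g i)).compl
  have hNnull : volume N = 0 := by
    apply measure_iUnion_null
    intro i
    exact ae_iff.1 ((hgLip i).ae_differentiableAt (μ := volume))

  have hseg := GBAux.ae_segment_avoids_null z hNm hNnull
  apply ae_restrict_of_ae
  filter_upwards [hseg] with x hx
  -- now fix x
  set γ : ℝ → EuclideanSpace ℝ (Fin m) := fun t => z + t • (x - z) with hγ
  set q : ℝ → ℝ := fun t => qGradNorm f T (γ t) with hq
  have hγc : Continuous γ := by fun_prop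
  have hqint : IntegrableOn q (Set.Ioc 0 1) volume := by
    refine Integrable.mono' (integrable_const (L : ℝ))
      ((hqm.comp hγc.measurable).aestronglyMeasurable) ?_
    filter_upwards with t
    rw [Real.norm_eq_abs, abs_of_nonneg (hq_nonneg _)]
    exact hq_le_L _
  have hxq : IntegrableOn (fun t => ‖x - z‖ * q t) (Set.Ioc 0 1) volume :=
    hqint.const_mul _
  have hγlip : LipschitzWith ‖x - z‖₊ γ := by
    apply LipschitzWith.of_dist_le_mul
    intro a b
    rw [dist_eq_norm, dist_eq_norm]
    have : γ a - γ b = (a - b) • (x - z) := by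
      rw [hγ]; simp [smul_sub, sub_smul]; abel
    rw [this, norm_smul]
    simp [Real.norm_eq_abs, coe_nnnorm, mul_comm]
  refine le_of_forall_pos_le_add ?_
  intro ε hε
  obtain ⟨i, hi⟩ := hdense (f z) (ε/2) (by linarith)
  set h : ℝ → ℝ := fun t => g i (γ t) with hh
  have hh1 : h 1 = g i x := by rw [hh, hγ]; simp
  have hh0 : h 0 = g i z := by rw [hh, hγ]; simp
  have hhLip : LipschitzWith (L * ‖x - z‖₊) h := (hgLip i).comp hγlip
  have hderiv : ∀ᵐ t ∂(volume : Measure ℝ), t ∈ Set.Ioo (0:ℝ) 1 →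
      ∃ d, HasDerivAt h d t ∧ d ≤ ‖x - z‖ * q t := by
    filter_upwards [hx] with t ht hIoo
    have hnotN : γ t ∉ N := ht hIoo
    have hdiff : DifferentiableAt ℝ (g i) (γ t) := by
      by_contra hcon
      exact hnotN (Set.mem_iUnion.2 ⟨i, hcon⟩)
    have hγd : HasDerivAt γ (x - z) t := by
      have h1 : HasDerivAt (fun s : ℝ => s • (x - z)) ((1:ℝ) • (x - z)) t :=
        (hasDerivAt_id t).smul_const (x - z)
      rw [one_smul] at h1
      exact h1.const_add z
    refine ⟨(fderiv ℝ (g i) (γ t)) (x - z), hdiff.hasFDerivAt.comp_hasDerivAt t hγd, ?_⟩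
    calc (fderiv ℝ (g i) (γ t)) (x - z) ≤ ‖(fderiv ℝ (g i) (γ t)) (x - z)‖ := le_abs_self _
    _ ≤ ‖fderiv ℝ (g i) (γ t)‖ * ‖x - z‖ := (fderiv ℝ (g i) (γ t)).le_opNorm _
    _ ≤ qGradNorm f T (γ t) * ‖x - z‖ :=
        mul_le_mul_of_nonneg_right (hq_ge i (γ t)) (norm_nonneg _)
    _ = ‖x - z‖ * q t := by rw [hq]; ring
  have hFTC := GBAux.lip_sub_le_integral hhLip hxq hderiv
  rw [hh1, hh0] at hFTC
  have hIeq : ∫ t in (0:ℝ)..1, ‖x - z‖ * q t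
      = ‖x - z‖ * ∫ t in (0:ℝ)..1, q t := intervalIntegral.integral_const_mul _ _
  rw [hIeq] at hFTC
  have step1 : GDist (f x) (f z) ≤ g i x + ε/2 := by
    have ht := GBAux.GDist_triangle (f x) (T i) (f z)
    have : GDist (T i) (f z) < ε/2 := by rw [GBAux.GDist_symm]; exact hi
    rw [hg]; simp only
    linarith
  have step3 : g i z < ε/2 := hi
  have : (∫ t in (0:ℝ)..1, qGradNorm f T (z + t • (x - z))) = ∫ t in (0:ℝ)..1, q t := rfl
  rw [this]
  linarith
end

section
/- (Doubling estimates from frequency bounds) Let H, D : (0,1] → (0,∞) be functions with H ∈ C¹, D absolutely continuous, satisfying H'(r) = ((m-1)/r)H(r) + 2D(r), and suppose I(r) = r·D(r)/H(r) is nondecreasing. Then for all 0 < r < t ≤ 1: (r/t)^{2I(t)} · H(t)/t^{m-1} ≤ H(r)/r^{m-1} ≤ (r/t)^{2I(r)} · H(t)/t^{m-1}. -/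
open Set

/-- Doubling estimates from frequency bounds: let `H, D : (0,1] → (0,∞)` with `H ∈ C¹`
(and `D` continuous, standing for absolute continuity), satisfying
`H'(r) = ((m-1)/r)·H(r) + 2·D(r)`, and suppose the frequency `I(r) = r·D(r)/H(r)` is
nondecreasing.  Then for all `0 < r < t ≤ 1`,
`(r/t)^{2I(t)} · H(t)/t^{m-1} ≤ H(r)/r^{m-1} ≤ (r/t)^{2I(r)} · H(t)/t^{m-1}`. -/
theorem frequency_doubling_estimates (m : ℕ) (H D I : ℝ → ℝ)
    (hHpos : ∀ r ∈ Ioc (0:ℝ) 1, 0 < H r)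
    (hDpos : ∀ r ∈ Ioc (0:ℝ) 1, 0 < D r)
    (hDcont : ContinuousOn D (Ioc (0:ℝ) 1))
    (hH' : ∀ r ∈ Ioc (0:ℝ) 1, HasDerivAt H ((((m : ℝ) - 1) / r) * H r + 2 * D r) r)
    (hI : ∀ r, I r = r * D r / H r)
    (hImono : MonotoneOn I (Ioc (0:ℝ) 1)) :
    ∀ r t : ℝ, 0 < r → r < t → t ≤ 1 →
      (r / t) ^ (2 * I t) * (H t / t ^ ((m : ℝ) - 1)) ≤ H r / r ^ ((m : ℝ) - 1) ∧
      H r / r ^ ((m : ℝ) - 1) ≤ (r / t) ^ (2 * I r) * (H t / t ^ ((m : ℝ) - 1)) := by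
  intro r t hr hrt ht1
  have ht0 : (0:ℝ) < t := hr.trans hrt
  have hmem : Icc r t ⊆ Ioc (0:ℝ) 1 := fun τ hτ => ⟨hr.trans_le hτ.1, hτ.2.trans ht1⟩
  have hrm : r ∈ Ioc (0:ℝ) 1 := ⟨hr, hrt.le.trans ht1⟩
  have htm : t ∈ Ioc (0:ℝ) 1 := ⟨ht0, ht1⟩
  set F : ℝ → ℝ := fun τ => Real.log (H τ) - ((m:ℝ)-1) * Real.log τ with hF
  -- derivative of τ ↦ F τ - c * log τ
  have hderiv : ∀ c : ℝ, ∀ τ ∈ Ioo r t,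
      HasDerivAt (fun τ => F τ - c * Real.log τ) (2 * D τ / H τ - c / τ) τ := by
    intro c τ hτ
    have hτm : τ ∈ Ioc (0:ℝ) 1 := hmem ⟨hτ.1.le, hτ.2.le⟩
    have hτ0 : (0:ℝ) < τ := hτm.1
    have hH0 : 0 < H τ := hHpos τ hτm
    have h1 : HasDerivAt (fun τ => Real.log (H τ))
        ((((((m:ℝ)-1)/τ) * H τ + 2 * D τ)) / H τ) τ := (hH' τ hτm).log hH0.ne'
    have h2 : HasDerivAt Real.log τ⁻¹ τ := Real.hasDerivAt_log hτ0.ne'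
    have h3 := (h1.sub ((h2.const_mul ((m:ℝ)-1)))).sub (h2.const_mul c)
    refine h3.congr_deriv ?_
    field_simp
    ring
  have hcont : ∀ c : ℝ, ContinuousOn (fun τ => F τ - c * Real.log τ) (Icc r t) := by
    intro c τ hτ
    have hτm := hmem hτ
    have hτ0 : (0:ℝ) < τ := hτm.1
    have hH0 := hHpos τ hτm
    have hlog : ContinuousAt Real.log τ := Real.continuousAt_log hτ0.ne'
    exact (((hH' τ hτm).continuousAt.log hH0.ne').sub
      (hlog.const_mul _)).sub (hlog.const_mul _) |>.continuousWithinAt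
  have hIval : ∀ x ∈ Ioo r t, 2 * D x / H x = 2 * I x / x := by
    intro x hx
    have hxm : x ∈ Ioc (0:ℝ) 1 := hmem ⟨hx.1.le, hx.2.le⟩
    have hx0 : (0:ℝ) < x := hxm.1
    have hH0 := hHpos x hxm
    rw [hI x]
    field_simp
  -- lower bound for F t - F r : monotone with c = 2 * I r
  have key1 : F r - 2 * I r * Real.log r ≤ F t - 2 * I r * Real.log t := by
    have hm := monotoneOn_of_deriv_nonneg (convex_Icc r t) (hcont (2 * I r))
      (fun x hx => by
        rw [interior_Icc] at hx
        exact (hderiv _ x hx).differentiableAt.differentiableWithinAt)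
      (fun x hx => by
        rw [interior_Icc] at hx
        rw [(hderiv (2 * I r) x hx).deriv, hIval x hx]
        have hxm : x ∈ Ioc (0:ℝ) 1 := hmem ⟨hx.1.le, hx.2.le⟩
        have hIle : I r ≤ I x := hImono hrm hxm hx.1.le
        have hx0 : (0:ℝ) < x := hxm.1
        have : 2 * I r / x ≤ 2 * I x / x := by gcongr
        linarith)
    exact hm ⟨le_refl r, hrt.le⟩ ⟨hrt.le, le_refl t⟩ hrt.le
  -- upper bound for F t - F r : antitone with c = 2 * I t
  have key2 : F t - 2 * I t * Real.log t ≤ F r - 2 * I t * Real.log r := by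
    have hm := antitoneOn_of_deriv_nonpos (convex_Icc r t) (hcont (2 * I t))
      (fun x hx => by
        rw [interior_Icc] at hx
        exact (hderiv _ x hx).differentiableAt.differentiableWithinAt)
      (fun x hx => by
        rw [interior_Icc] at hx
        rw [(hderiv (2 * I t) x hx).deriv, hIval x hx]
        have hxm : x ∈ Ioc (0:ℝ) 1 := hmem ⟨hx.1.le, hx.2.le⟩
        have hIle : I x ≤ I t := hImono hxm htm hx.2.le
        have hx0 : (0:ℝ) < x := hxm.1
        have : 2 * I x / x ≤ 2 * I t / x := by gcongr
        linarith)
    exact hm ⟨le_refl r, hrt.le⟩ ⟨hrt.le, le_refl t⟩ hrt.le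
  -- rewrite everything via exp
  have eH : ∀ s, s ∈ Ioc (0:ℝ) 1 → H s / s ^ ((m:ℝ)-1) = Real.exp (F s) := by
    intro s hs
    rw [hF]
    rw [Real.exp_sub, Real.exp_log (hHpos s hs), mul_comm, ← Real.rpow_def_of_pos hs.1]
  have ediv : ∀ c : ℝ, (r / t) ^ c = Real.exp (c * (Real.log r - Real.log t)) := by
    intro c
    rw [Real.rpow_def_of_pos (div_pos hr ht0), Real.log_div hr.ne' ht0.ne', mul_comm]
  rw [eH r hrm, eH t htm, ediv, ediv, ← Real.exp_add, ← Real.exp_add,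
    Real.exp_le_exp, Real.exp_le_exp]
  constructor <;> nlinarith [key1, key2]
end

section
/- (One-dimensional W^{1,p} selection) Let I = [a,b] and f ∈ W^{1,p}(I, A_Q(ℝⁿ)). Then f has a representative that is absolutely continuous (Hölder with exponent 1 - 1/p if p > 1), and there exists a selection f₁,...,f_Q ∈ W^{1,p}(I, ℝⁿ) with f(t) = Σᵢ⟦fᵢ(t)⟧ for a.e. t and |Dfᵢ| ≤ |Df| almost everywhere for each i. -/
open MeasureTheory Set

namespace OneDimSel

variable {n Q : ℕ}

/-- The aligned (ℓ²) distance between tuples. -/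
noncomputable def Dst (P S : Fin Q → EuclideanSpace ℝ (Fin n)) : ℝ :=
  Real.sqrt (∑ i, ‖P i - S i‖ ^ 2)

lemma dst_nonneg (P S : Fin Q → EuclideanSpace ℝ (Fin n)) : 0 ≤ Dst P S :=
  Real.sqrt_nonneg _

lemma dst_self (P : Fin Q → EuclideanSpace ℝ (Fin n)) : Dst P P = 0 := by
  simp [Dst]

lemma dst_comm (P S : Fin Q → EuclideanSpace ℝ (Fin n)) : Dst P S = Dst S P := by
  unfold Dst
  congr 1
  exact Finset.sum_congr rfl fun i _ => by rw [norm_sub_rev]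

lemma norm_le_dst (P S : Fin Q → EuclideanSpace ℝ (Fin n)) (i : Fin Q) :
    ‖P i - S i‖ ≤ Dst P S := by
  have h : ‖P i - S i‖ ^ 2 ≤ ∑ j, ‖P j - S j‖ ^ 2 :=
    Finset.single_le_sum (f := fun j => ‖P j - S j‖ ^ 2) (fun j _ => sq_nonneg _)
      (Finset.mem_univ i)
  calc ‖P i - S i‖ = Real.sqrt (‖P i - S i‖ ^ 2) := by
        rw [Real.sqrt_sq (norm_nonneg _)]
    _ ≤ Dst P S := Real.sqrt_le_sqrt h

lemma dst_eq_norm (P S : Fin Q → EuclideanSpace ℝ (Fin n)) :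
    Dst P S = ‖(WithLp.equiv 2 (Fin Q → EuclideanSpace ℝ (Fin n))).symm P
      - (WithLp.equiv 2 (Fin Q → EuclideanSpace ℝ (Fin n))).symm S‖ := by
  rw [PiLp.norm_eq_of_L2]
  rfl

lemma dst_triangle (P S R : Fin Q → EuclideanSpace ℝ (Fin n)) :
    Dst P R ≤ Dst P S + Dst S R := by
  rw [dst_eq_norm, dst_eq_norm, dst_eq_norm]
  exact norm_sub_le_norm_sub_add_norm_sub _ _ _

lemma dst_reindex (P S : Fin Q → EuclideanSpace ℝ (Fin n)) (σ : Equiv.Perm (Fin Q)) :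
    Dst (P ∘ ⇑σ) (S ∘ ⇑σ) = Dst P S := by
  unfold Dst
  congr 1
  exact Equiv.sum_comp σ (fun i => ‖P i - S i‖ ^ 2)

lemma eq_of_dst_nonpos {P S : Fin Q → EuclideanSpace ℝ (Fin n)} (h : Dst P S ≤ 0) :
    P = S := by
  funext i
  have h1 : ‖P i - S i‖ ≤ 0 := (norm_le_dst P S i).trans h
  have h2 : P i - S i = 0 := by
    have := norm_nonneg (P i - S i)
    have : ‖P i - S i‖ = 0 := le_antisymm h1 this
    exact norm_eq_zero.mp this
  exact sub_eq_zero.mp h2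

lemma gdist_le_dst (P S : Fin Q → EuclideanSpace ℝ (Fin n)) (σ : Equiv.Perm (Fin Q)) :
    GDist P S ≤ Dst P (S ∘ ⇑σ) := by
  apply ciInf_le _ σ
  exact ⟨0, fun x ⟨τ, hτ⟩ => hτ ▸ Real.sqrt_nonneg _⟩

lemma gdist_nonneg (P S : Fin Q → EuclideanSpace ℝ (Fin n)) : 0 ≤ GDist P S :=
  le_ciInf fun σ => Real.sqrt_nonneg _

lemma exists_opt (P S : Fin Q → EuclideanSpace ℝ (Fin n)) :
    ∃ σ : Equiv.Perm (Fin Q), GDist P S = Dst P (S ∘ ⇑σ) := by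
  obtain ⟨σ₀, hσ₀⟩ := Finite.exists_min (fun σ : Equiv.Perm (Fin Q) => Dst P (S ∘ ⇑σ))
  exact ⟨σ₀, le_antisymm (gdist_le_dst P S σ₀) (le_ciInf fun σ => hσ₀ σ)⟩

lemma gdist_le_dst_id (P S : Fin Q → EuclideanSpace ℝ (Fin n)) : GDist P S ≤ Dst P S := by
  have := gdist_le_dst P S 1
  simpa using this

lemma gdist_comm_le (P S : Fin Q → EuclideanSpace ℝ (Fin n)) : GDist S P ≤ GDist P S := by
  obtain ⟨σ, hσ⟩ := exists_opt P S
  have h1 : Dst S (P ∘ ⇑σ⁻¹) = Dst P (S ∘ ⇑σ) := by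
    have := dst_reindex S (P ∘ ⇑σ⁻¹) σ
    have he : (P ∘ ⇑σ⁻¹) ∘ ⇑σ = P := by
      funext i; simp
    rw [he] at this
    rw [← this, dst_comm]
  calc GDist S P ≤ Dst S (P ∘ ⇑σ⁻¹) := gdist_le_dst S P σ⁻¹
    _ = Dst P (S ∘ ⇑σ) := h1
    _ = GDist P S := hσ.symm

lemma gdist_comm (P S : Fin Q → EuclideanSpace ℝ (Fin n)) : GDist P S = GDist S P :=
  le_antisymm (gdist_comm_le S P) (gdist_comm_le P S)

lemma gdist_triangle (P S R : Fin Q → EuclideanSpace ℝ (Fin n)) :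
    GDist P R ≤ GDist P S + GDist S R := by
  obtain ⟨σ, hσ⟩ := exists_opt P S
  obtain ⟨τ, hτ⟩ := exists_opt S R
  have hcoe : ⇑(σ.trans τ) = ⇑τ ∘ ⇑σ := rfl
  calc GDist P R ≤ Dst P (R ∘ ⇑(σ.trans τ)) := gdist_le_dst P R (σ.trans τ)
    _ = Dst P ((R ∘ ⇑τ) ∘ ⇑σ) := by rw [hcoe]; rfl
    _ ≤ Dst P (S ∘ ⇑σ) + Dst (S ∘ ⇑σ) ((R ∘ ⇑τ) ∘ ⇑σ) := dst_triangle _ _ _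
    _ = Dst P (S ∘ ⇑σ) + Dst S (R ∘ ⇑τ) := by rw [dst_reindex]
    _ = GDist P S + GDist S R := by rw [hσ, hτ]

lemma gdist_perm_right_le (P S : Fin Q → EuclideanSpace ℝ (Fin n)) (τ : Equiv.Perm (Fin Q)) :
    GDist P (S ∘ ⇑τ) ≤ GDist P S := by
  obtain ⟨σ, hσ⟩ := exists_opt P S
  have he : (S ∘ ⇑τ) ∘ ⇑(σ.trans τ.symm) = S ∘ ⇑σ := by
    funext i; simp
  calc GDist P (S ∘ ⇑τ) ≤ Dst P ((S ∘ ⇑τ) ∘ ⇑(σ.trans τ.symm)) :=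
        gdist_le_dst P (S ∘ ⇑τ) (σ.trans τ.symm)
    _ = Dst P (S ∘ ⇑σ) := by rw [he]
    _ = GDist P S := hσ.symm

lemma gdist_perm_right (P S : Fin Q → EuclideanSpace ℝ (Fin n)) (τ : Equiv.Perm (Fin Q)) :
    GDist P (S ∘ ⇑τ) = GDist P S := by
  refine le_antisymm (gdist_perm_right_le P S τ) ?_
  have := gdist_perm_right_le P (S ∘ ⇑τ) τ.symm
  have he : (S ∘ ⇑τ) ∘ ⇑τ.symm = S := by funext i; simp
  rwa [he] at this

lemma gdist_perm_left (P S : Fin Q → EuclideanSpace ℝ (Fin n)) (τ : Equiv.Perm (Fin Q)) :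
    GDist (P ∘ ⇑τ) S = GDist P S := by
  rw [gdist_comm, gdist_perm_right, gdist_comm]

lemma gdist_self (P : Fin Q → EuclideanSpace ℝ (Fin n)) : GDist P P = 0 :=
  le_antisymm (by simpa [dst_self] using gdist_le_dst_id P P) (gdist_nonneg P P)

lemma gdist_perm_self (P : Fin Q → EuclideanSpace ℝ (Fin n)) (τ : Equiv.Perm (Fin Q)) :
    GDist P (P ∘ ⇑τ) = 0 := by
  rw [gdist_perm_right, gdist_self]


/-! ### Piecewise interpolation -/

/-- clamp to [0,1] -/
noncomputable def clamp (c : ℝ) : ℝ := max 0 (min 1 c)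

lemma clamp_mono : Monotone clamp := fun x y h =>
  max_le_max le_rfl (min_le_min le_rfl h)

lemma clamp_abs_sub_le (u v : ℝ) : |clamp u - clamp v| ≤ |u - v| := by
  unfold clamp
  rw [max_comm 0 (min 1 u), max_comm 0 (min 1 v)]
  refine (abs_max_sub_max_le_abs _ _ _).trans ?_
  refine (abs_min_sub_min_le_max 1 u 1 v).trans ?_
  simp

lemma clamp_of_nonpos {c : ℝ} (h : c ≤ 0) : clamp c = 0 := by
  unfold clamp
  rw [max_eq_left]
  exact le_trans (min_le_right _ _) h

lemma clamp_of_one_le {c : ℝ} (h : 1 ≤ c) : clamp c = 1 := by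
  unfold clamp
  rw [min_eq_left h, max_eq_right zero_le_one]

/-- A reparametrized linear segment between tuples. -/
noncomputable def seg (W : ℝ → ℝ) (s₁ s₂ : ℝ) (v₁ v₂ : Fin Q → EuclideanSpace ℝ (Fin n))
    (x : ℝ) : Fin Q → EuclideanSpace ℝ (Fin n) :=
  v₁ + clamp ((W x - W s₁) / (W s₂ - W s₁)) • (v₂ - v₁)

lemma dst_seg (W : ℝ → ℝ) (s₁ s₂ : ℝ) (v₁ v₂ : Fin Q → EuclideanSpace ℝ (Fin n)) (x y : ℝ) :
    Dst (seg W s₁ s₂ v₁ v₂ x) (seg W s₁ s₂ v₁ v₂ y)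
      = |clamp ((W x - W s₁) / (W s₂ - W s₁)) - clamp ((W y - W s₁) / (W s₂ - W s₁))|
        * Dst v₁ v₂ := by
  set cx := clamp ((W x - W s₁) / (W s₂ - W s₁))
  set cy := clamp ((W y - W s₁) / (W s₂ - W s₁))
  unfold Dst seg
  have hpt : ∀ i, (v₁ + cx • (v₂ - v₁)) i - (v₁ + cy • (v₂ - v₁)) i
      = (cx - cy) • (v₂ i - v₁ i) := by
    intro i
    show v₁ i + cx • (v₂ i - v₁ i) - (v₁ i + cy • (v₂ i - v₁ i)) = (cx - cy) • (v₂ i - v₁ i)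
    rw [sub_smul]
    abel
  have hsum : ∑ i, ‖(v₁ + cx • (v₂ - v₁)) i - (v₁ + cy • (v₂ - v₁)) i‖ ^ 2
      = (cx - cy) ^ 2 * ∑ i, ‖v₁ i - v₂ i‖ ^ 2 := by
    rw [Finset.mul_sum]
    refine Finset.sum_congr rfl fun i _ => ?_
    rw [hpt i, norm_smul, mul_pow, Real.norm_eq_abs, sq_abs, norm_sub_rev]
  rw [hsum, Real.sqrt_mul (sq_nonneg _), Real.sqrt_sq_eq_abs]

lemma seg_left {W : ℝ → ℝ} (hW : Monotone W) {s₁ s₂ x : ℝ}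
    (v₁ v₂ : Fin Q → EuclideanSpace ℝ (Fin n)) (hx : x ≤ s₁) (hs : s₁ ≤ s₂) :
    seg W s₁ s₂ v₁ v₂ x = v₁ := by
  have hc : clamp ((W x - W s₁) / (W s₂ - W s₁)) = 0 :=
    clamp_of_nonpos (div_nonpos_of_nonpos_of_nonneg (sub_nonpos.2 (hW hx))
      (sub_nonneg.2 (hW hs)))
  unfold seg
  rw [hc, zero_smul, add_zero]

lemma seg_right {W : ℝ → ℝ} {s₁ s₂ x : ℝ}
    {v₁ v₂ : Fin Q → EuclideanSpace ℝ (Fin n)} (hd : Dst v₁ v₂ ≤ W s₂ - W s₁)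
    (hW : Monotone W) (hx : s₂ ≤ x) :
    seg W s₁ s₂ v₁ v₂ x = v₂ := by
  rcases lt_or_ge 0 (W s₂ - W s₁) with hpos | hnp
  · have hc : clamp ((W x - W s₁) / (W s₂ - W s₁)) = 1 := by
      apply clamp_of_one_le
      rw [le_div_iff₀ hpos, one_mul]
      have := hW hx
      linarith
    unfold seg
    rw [hc, one_smul, add_comm, sub_add_cancel]
  · have hv : v₁ = v₂ := eq_of_dst_nonpos (le_trans hd hnp)
    unfold seg
    rw [hv, sub_self, smul_zero, add_zero]

lemma seg_dst_le {W : ℝ → ℝ} (hW : Monotone W) {s₁ s₂ x y : ℝ}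
    {v₁ v₂ : Fin Q → EuclideanSpace ℝ (Fin n)} (hd : Dst v₁ v₂ ≤ W s₂ - W s₁)
    (hxy : x ≤ y) :
    Dst (seg W s₁ s₂ v₁ v₂ x) (seg W s₁ s₂ v₁ v₂ y) ≤ W y - W x := by
  rw [dst_seg]
  rcases lt_or_ge 0 (W s₂ - W s₁) with hpos | hnp
  · have h1 : |clamp ((W x - W s₁) / (W s₂ - W s₁)) - clamp ((W y - W s₁) / (W s₂ - W s₁))|
        ≤ (W y - W x) / (W s₂ - W s₁) := by
      refine (clamp_abs_sub_le _ _).trans_eq ?_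
      rw [div_sub_div_same, abs_div, abs_of_pos hpos, sub_sub_sub_cancel_right,
        abs_sub_comm, abs_of_nonneg (sub_nonneg.2 (hW hxy))]
    calc _ ≤ (W y - W x) / (W s₂ - W s₁) * (W s₂ - W s₁) :=
          mul_le_mul h1 hd (dst_nonneg _ _)
            (div_nonneg (sub_nonneg.2 (hW hxy)) (le_of_lt hpos))
      _ = W y - W x := div_mul_cancel₀ _ (ne_of_gt hpos)
  · have hv : Dst v₁ v₂ = 0 := le_antisymm (hd.trans hnp) (dst_nonneg _ _)
    rw [hv, mul_zero]
    exact sub_nonneg.2 (hW hxy)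

/-- The compatibility relation along a chain of nodes. -/
def Rel (W : ℝ → ℝ) (p q : ℝ × (Fin Q → EuclideanSpace ℝ (Fin n))) : Prop :=
  p.1 < q.1 ∧ Dst p.2 q.2 ≤ W q.1 - W p.1

/-- Piecewise reparametrized-linear interpolation through a list of nodes. -/
noncomputable def pl (W : ℝ → ℝ) :
    List (ℝ × (Fin Q → EuclideanSpace ℝ (Fin n))) → ℝ → Fin Q → EuclideanSpace ℝ (Fin n)
  | [] => fun _ => 0
  | [(_, v)] => fun _ => v
  | (s₁, v₁) :: (s₂, v₂) :: l => fun x =>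
      if x ≤ s₂ then seg W s₁ s₂ v₁ v₂ x else pl W ((s₂, v₂) :: l) x

lemma pl_head {W : ℝ → ℝ} (hW : Monotone W) {s : ℝ}
    {v : Fin Q → EuclideanSpace ℝ (Fin n)} {l : List (ℝ × (Fin Q → EuclideanSpace ℝ (Fin n)))}
    (hchain : List.Chain' (Rel W) ((s, v) :: l)) {x : ℝ} (hx : x ≤ s) :
    pl W ((s, v) :: l) x = v := by
  match l with
  | [] => rfl
  | (s₂, v₂) :: l' =>
    have hs : s < s₂ := (List.isChain_cons_cons.1 hchain).1.1
    show (if x ≤ s₂ then seg W s s₂ v v₂ x else _) = v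
    rw [if_pos (hx.trans hs.le)]
    exact seg_left hW v v₂ hx hs.le

lemma pl_node {W : ℝ → ℝ} (hW : Monotone W)
    {l : List (ℝ × (Fin Q → EuclideanSpace ℝ (Fin n)))}
    (hchain : List.Chain' (Rel W) l) {s : ℝ} {v : Fin Q → EuclideanSpace ℝ (Fin n)}
    (hmem : (s, v) ∈ l) : pl W l s = v := by
  induction l with
  | nil => exact absurd hmem List.not_mem_nil
  | cons hd tl ih =>
    rcases List.mem_cons.1 hmem with heq | htl
    · subst heq
      exact pl_head hW hchain le_rfl
    · match tl, htl with
      | (s₂, v₂) :: l', htl =>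
        obtain ⟨hd₁, hd₂⟩ := hd
        have hchain' : List.Chain' (Rel W) ((s₂, v₂) :: l') := hchain.tail
        have hrel : Rel W (hd₁, hd₂) (s₂, v₂) := (List.isChain_cons_cons.1 hchain).1
        rcases List.mem_cons.1 htl with heq | hl'
        · cases heq
          show (if s ≤ s then seg W hd₁ s hd₂ v s else _) = v
          rw [if_pos le_rfl]
          exact seg_right hrel.2 hW le_rfl
        · -- s is strictly beyond s₂
          have hpw : List.Pairwise (fun p q : ℝ × (Fin Q → EuclideanSpace ℝ (Fin n)) =>
              p.1 < q.1) ((s₂, v₂) :: l') := by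
            haveI : IsTrans (ℝ × (Fin Q → EuclideanSpace ℝ (Fin n)))
                (fun p q => p.1 < q.1) := ⟨fun _ _ _ h h' => lt_trans h h'⟩
            exact List.isChain_iff_pairwise.1 (hchain'.imp fun a b h => h.1)
          have hs2s : s₂ < s := (List.pairwise_cons.1 hpw).1 (s, v) hl'
          show (if s ≤ s₂ then seg W hd₁ s₂ hd₂ v₂ s else pl W ((s₂, v₂) :: l') s) = v
          rw [if_neg (not_le.2 hs2s)]
          exact ih hchain' htl

lemma pl_dst {W : ℝ → ℝ} (hW : Monotone W)
    {l : List (ℝ × (Fin Q → EuclideanSpace ℝ (Fin n)))}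
    (hchain : List.Chain' (Rel W) l) :
    ∀ x y, x ≤ y → Dst (pl W l x) (pl W l y) ≤ W y - W x := by
  induction l with
  | nil => exact fun x y hxy => by simpa [pl, dst_self] using sub_nonneg.2 (hW hxy)
  | cons hd tl ih =>
    obtain ⟨s₁, v₁⟩ := hd
    cases tl with
    | nil => exact fun x y hxy => by simpa [pl, dst_self] using sub_nonneg.2 (hW hxy)
    | cons hd2 l' =>
      obtain ⟨s₂, v₂⟩ := hd2
      intro x y hxy
      have hrel : Rel W (s₁, v₁) (s₂, v₂) := (List.isChain_cons_cons.1 hchain).1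
      have hchain' : List.Chain' (Rel W) ((s₂, v₂) :: l') := hchain.tail
      have hpl : ∀ z, pl W ((s₁, v₁) :: (s₂, v₂) :: l') z
          = if z ≤ s₂ then seg W s₁ s₂ v₁ v₂ z else pl W ((s₂, v₂) :: l') z := fun _ => rfl
      rw [hpl x, hpl y]
      rcases le_or_gt y s₂ with hy | hy
      · rw [if_pos (hxy.trans hy), if_pos hy]
        exact seg_dst_le hW hrel.2 hxy
      · rw [if_neg (not_le.2 hy)]
        rcases le_or_gt x s₂ with hx | hx
        · rw [if_pos hx]
          have hseg2 : seg W s₁ s₂ v₁ v₂ s₂ = v₂ := seg_right hrel.2 hW le_rfl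
          have hpl2 : pl W ((s₂, v₂) :: l') s₂ = v₂ := pl_head hW hchain' le_rfl
          have h1 : Dst (seg W s₁ s₂ v₁ v₂ x) (seg W s₁ s₂ v₁ v₂ s₂) ≤ W s₂ - W x :=
            seg_dst_le hW hrel.2 hx
          have h2 : Dst (pl W ((s₂, v₂) :: l') s₂) (pl W ((s₂, v₂) :: l') y) ≤ W y - W s₂ :=
            ih hchain' s₂ y hy.le
          rw [hseg2] at h1
          rw [hpl2] at h2
          calc Dst (seg W s₁ s₂ v₁ v₂ x) (pl W ((s₂, v₂) :: l') y)
              ≤ Dst (seg W s₁ s₂ v₁ v₂ x) v₂ + Dst v₂ (pl W ((s₂, v₂) :: l') y) :=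
                dst_triangle _ _ _
            _ ≤ (W s₂ - W x) + (W y - W s₂) := add_le_add h1 h2
            _ = W y - W x := by ring
        · rw [if_neg (not_le.2 hx)]
          exact ih hchain' x y hxy

/-- Pick an optimal permutation rearrangement of `f t` against `v`. -/
noncomputable def pick (f : ℝ → Fin Q → EuclideanSpace ℝ (Fin n))
    (v : Fin Q → EuclideanSpace ℝ (Fin n)) (t : ℝ) : Fin Q → EuclideanSpace ℝ (Fin n) :=
  (f t) ∘ ⇑(Classical.choose (Finite.exists_min fun σ : Equiv.Perm (Fin Q) =>
    Dst v ((f t) ∘ ⇑σ)))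

lemma dst_pick (f : ℝ → Fin Q → EuclideanSpace ℝ (Fin n))
    (v : Fin Q → EuclideanSpace ℝ (Fin n)) (t : ℝ) :
    Dst v (pick f v t) = GDist v (f t) := by
  have hspec := Classical.choose_spec (Finite.exists_min fun σ : Equiv.Perm (Fin Q) =>
    Dst v ((f t) ∘ ⇑σ))
  obtain ⟨σ₀, hσ₀⟩ := exists_opt v (f t)
  refine le_antisymm ?_ ?_
  · rw [hσ₀]; exact hspec σ₀
  · exact gdist_le_dst v (f t) _

lemma pick_perm (f : ℝ → Fin Q → EuclideanSpace ℝ (Fin n))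
    (v : Fin Q → EuclideanSpace ℝ (Fin n)) (t : ℝ) :
    ∃ σ : Equiv.Perm (Fin Q), pick f v t = (f t) ∘ ⇑σ := ⟨_, rfl⟩

/-- Nodes: points together with successively matched values. -/
noncomputable def nodes (f : ℝ → Fin Q → EuclideanSpace ℝ (Fin n))
    (v : Fin Q → EuclideanSpace ℝ (Fin n)) :
    List ℝ → List (ℝ × (Fin Q → EuclideanSpace ℝ (Fin n)))
  | [] => []
  | t :: ts => (t, pick f v t) :: nodes f (pick f v t) ts

lemma nodes_chain {W : ℝ → ℝ} {f : ℝ → Fin Q → EuclideanSpace ℝ (Fin n)}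
    {ts : List ℝ} (hsort : List.Chain' (· < ·) ts)
    (hf : ∀ s ∈ ts, ∀ t ∈ ts, s ≤ t → GDist (f s) (f t) ≤ W t - W s)
    (v : Fin Q → EuclideanSpace ℝ (Fin n)) :
    List.Chain' (Rel W) (nodes f v ts) := by
  induction ts generalizing v with
  | nil => exact List.isChain_nil
  | cons t ts' ih =>
    match ts' with
    | [] => exact List.isChain_singleton _
    | t₂ :: ts'' =>
      have h12 : t < t₂ := (List.isChain_cons_cons.1 hsort).1
      simp only [nodes]
      apply List.isChain_cons_cons.2
      constructor
      · constructor
        · exact h12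
        · have h1 : Dst (pick f v t) (pick f (pick f v t) t₂)
              = GDist (pick f v t) (f t₂) := dst_pick f _ t₂
          obtain ⟨σ, hσ⟩ := pick_perm f v t
          rw [h1, hσ, gdist_perm_left]
          exact hf t List.mem_cons_self t₂ (List.mem_cons_of_mem _ List.mem_cons_self)
            h12.le
      · have := ih (hsort.tail) (fun s hs t' ht' hst => hf s (List.mem_cons_of_mem _ hs)
          t' (List.mem_cons_of_mem _ ht') hst) (pick f v t)
        exact this

lemma mem_nodes {f : ℝ → Fin Q → EuclideanSpace ℝ (Fin n)}
    {ts : List ℝ} {t : ℝ} (ht : t ∈ ts) (v : Fin Q → EuclideanSpace ℝ (Fin n)) :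
    ∃ w, (t, w) ∈ nodes f v ts ∧ ∃ σ : Equiv.Perm (Fin Q), w = (f t) ∘ ⇑σ := by
  induction ts generalizing v with
  | nil => exact absurd ht List.not_mem_nil
  | cons s ts' ih =>
    rcases List.mem_cons.1 ht with heq | hts'
    · subst heq
      obtain ⟨σ, hσ⟩ := pick_perm f v t
      exact ⟨pick f v t, List.mem_cons_self, σ, hσ⟩
    · obtain ⟨w, hw, σ, hσ⟩ := ih hts' (pick f v s)
      exact ⟨w, List.mem_cons_of_mem _ hw, σ, hσ⟩

end OneDimSel

open OneDimSel Filter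
open scoped ENNReal NNReal

set_option maxHeartbeats 1000000 in
/-- One-dimensional `W^{1,p}` selection: let `f ∈ W^{1,p}([a,b], A_Q(ℝⁿ))`, encoded by a
(representative of a) selection `f` together with a dominating function `g ∈ L^p`
(playing the role of `|Df|`) such that, for every `T ∈ A_Q(ℝⁿ)`, the function
`G(f(·), T)` has an absolutely continuous representative whose increments are
controlled by `∫ g`.  Then `f` has a representative `x ↦ Σᵢ ⟦Fᵢ(x)⟧` which is
absolutely continuous — Hölder with exponent `1 - 1/p` when `p > 1` — given by a
selection `F₁, ..., F_Q ∈ W^{1,p}([a,b], ℝⁿ)` with `|DFᵢ| ≤ |Df|` almost everywhere. -/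
theorem one_dim_sobolev_selection (n Q : ℕ) (p a b : ℝ) (hp : 1 ≤ p) (hab : a < b)
    (f : ℝ → Fin Q → EuclideanSpace ℝ (Fin n))
    (g : ℝ → ℝ) (hg0 : ∀ t, 0 ≤ g t)
    (hgLp : MemLp g (ENNReal.ofReal p) (volume.restrict (Icc a b)))
    (hW : ∀ T : Fin Q → EuclideanSpace ℝ (Fin n), ∃ u : ℝ → ℝ,
      (∀ᵐ x ∂(volume.restrict (Icc a b)), u x = GDist (f x) T) ∧
      ∀ x ∈ Icc a b, ∀ y ∈ Icc a b, x ≤ y → |u y - u x| ≤ ∫ t in x..y, g t) :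
    ∃ F : Fin Q → ℝ → EuclideanSpace ℝ (Fin n),
      (∀ᵐ x ∂(volume.restrict (Icc a b)), GDist (f x) (fun i => F i x) = 0) ∧
      (∀ x ∈ Icc a b, ∀ y ∈ Icc a b, x ≤ y →
        GDist (fun i => F i x) (fun i => F i y) ≤ ∫ t in x..y, g t) ∧
      (∀ i, ∀ x ∈ Icc a b, ∀ y ∈ Icc a b, x ≤ y →
        ‖F i y - F i x‖ ≤ ∫ t in x..y, g t) ∧
      (1 < p → ∃ C : ℝ, ∀ x ∈ Icc a b, ∀ y ∈ Icc a b,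
        GDist (fun i => F i x) (fun i => F i y) ≤ C * |y - x| ^ (1 - 1 / p)) := by
  classical
  set μ := volume.restrict (Icc a b) with hμdef
  haveI : IsFiniteMeasure μ := by
    constructor
    rw [hμdef, Measure.restrict_apply_univ]
    exact measure_Icc_lt_top
  have hp1 : (1 : ℝ≥0∞) ≤ ENNReal.ofReal p := by
    rw [ENNReal.one_le_ofReal]; exact hp
  have hgInt : IntegrableOn g (Icc a b) volume :=
    memLp_one_iff_integrable.mp (hgLp.mono_exponent hp1)
  set g' : ℝ → ℝ := (Icc a b).indicator g with hg'def
  have hg'int : Integrable g' volume := hgInt.integrable_indicator measurableSet_Icc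
  have hg'0 : ∀ t, 0 ≤ g' t := fun t => Set.indicator_nonneg (fun s _ => hg0 s) t
  set W : ℝ → ℝ := fun x => ∫ t in a..x, g' t with hWdef
  have hWdiff : ∀ x y : ℝ, W y - W x = ∫ t in x..y, g' t := by
    intro x y
    exact intervalIntegral.integral_interval_sub_left hg'int.intervalIntegrable
      hg'int.intervalIntegrable
  have hWmono : Monotone W := by
    intro x y hxy
    have h1 := hWdiff x y
    have h2 : 0 ≤ ∫ t in x..y, g' t :=
      intervalIntegral.integral_nonneg hxy (fun u _ => hg'0 u)
    linarith
  have hWcont : Continuous W := hg'int.continuous_primitive a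
  have hWsub : ∀ x ∈ Icc a b, ∀ y ∈ Icc a b, x ≤ y → W y - W x = ∫ t in x..y, g t := by
    intro x hx y hy hxy
    rw [hWdiff x y]
    apply intervalIntegral.integral_congr
    intro t ht
    rw [Set.uIcc_of_le hxy] at ht
    exact Set.indicator_of_mem (show t ∈ Icc a b from ⟨le_trans hx.1 ht.1, le_trans ht.2 hy.2⟩) g
  -- dense sequence of tuples
  obtain ⟨T, hT⟩ := TopologicalSpace.exists_dense_seq (Fin Q → EuclideanSpace ℝ (Fin n))
  set Pset : Set ℝ := {x : ℝ | ∀ m : ℕ, (hW (T m)).choose x = GDist (f x) (T m)} with hPdef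
  have hPae : ∀ᵐ x ∂μ, x ∈ Pset := ae_all_iff.2 fun m => (hW (T m)).choose_spec.1
  -- Step A : continuity of f on Pset
  have hA : ∀ s t : ℝ, s ∈ Pset → s ∈ Icc a b → t ∈ Pset → t ∈ Icc a b → s ≤ t →
      GDist (f s) (f t) ≤ W t - W s := by
    intro s t hsP hsI htP htI hst
    have key : ∀ ε : ℝ, 0 < ε → GDist (f s) (f t) ≤ (W t - W s) + ε := by
      intro ε hε
      have hcont : Continuous fun S : (Fin Q → EuclideanSpace ℝ (Fin n)) => Dst (f s) S := by
        unfold Dst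
        exact Real.continuous_sqrt.comp (continuous_finset_sum _ fun i _ =>
          ((continuous_const.sub (continuous_apply i)).norm.pow 2))
      have hopen : IsOpen {S : Fin Q → EuclideanSpace ℝ (Fin n) | Dst (f s) S < ε / 2} :=
        isOpen_lt hcont continuous_const
      obtain ⟨m, hm⟩ := hT.exists_mem_open hopen
        ⟨f s, by simp only [Set.mem_setOf_eq, dst_self]; linarith⟩
      have hm' : Dst (f s) (T m) < ε / 2 := hm
      have h2 := ((hW (T m)).choose_spec.2) s hsI t htI hst
      rw [← hWsub s hsI t htI hst] at h2
      have hs' := hsP m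
      have ht' := htP m
      have e1 : GDist (f t) (T m) ≤ GDist (f s) (T m) + (W t - W s) := by
        rw [← hs', ← ht']
        have := abs_le.1 h2
        linarith [this.2]
      have e2 : GDist (f s) (T m) ≤ Dst (f s) (T m) := gdist_le_dst_id _ _
      calc GDist (f s) (f t) = GDist (f t) (f s) := gdist_comm _ _
        _ ≤ GDist (f t) (T m) + GDist (T m) (f s) := gdist_triangle _ _ _
        _ = GDist (f t) (T m) + GDist (f s) (T m) := by rw [gdist_comm (T m)]
        _ ≤ (W t - W s) + ε := by linarith
    by_contra hcon
    push_neg at hcon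
    have := key ((GDist (f s) (f t) - (W t - W s)) / 2) (by linarith)
    linarith
  -- picking points of Pset in subintervals
  have hpick : ∀ u v : ℝ, a ≤ u → v ≤ b → u < v → (Pset ∩ Ioo u v).Nonempty := by
    intro u v hu hv huv
    by_contra hne
    rw [Set.not_nonempty_iff_eq_empty] at hne
    have hsub : Ioo u v ⊆ {x | ¬ x ∈ Pset} := by
      intro x hx hxP
      have hmem : x ∈ Pset ∩ Ioo u v := ⟨hxP, hx⟩
      rw [hne] at hmem
      exact absurd hmem (Set.notMem_empty x)
    have h0 : μ (Ioo u v) = 0 := measure_mono_null hsub (ae_iff.mp hPae)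
    have h1 : μ (Ioo u v) = volume (Ioo u v) := by
      rw [hμdef, Measure.restrict_apply measurableSet_Ioo,
        inter_eq_self_of_subset_left (show Ioo u v ⊆ Icc a b from fun x hx =>
          ⟨le_trans hu hx.1.le, le_trans hx.2.le hv⟩)]
    rw [h1, Real.volume_Ioo] at h0
    exact absurd h0 (ne_of_gt (ENNReal.ofReal_pos.2 (sub_pos.2 huv)))
  obtain ⟨x₀, hx₀P, hx₀I⟩ := hpick a b le_rfl le_rfl hab
  obtain ⟨e, he⟩ : ∃ e : ℕ → ℚ × ℚ, Function.Surjective e :=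
    ⟨fun k => (Denumerable.eqv (ℚ × ℚ)).symm k, (Denumerable.eqv (ℚ × ℚ)).symm.surjective⟩
  set q : ℕ → ℝ := fun k =>
    if h : (Pset ∩ Ioo (max a (((e k).1 : ℚ) : ℝ)) (min b (((e k).2 : ℚ) : ℝ))).Nonempty
    then h.choose else x₀ with hqdef
  have hqP : ∀ k, q k ∈ Pset ∧ q k ∈ Ioo a b := by
    intro k
    rw [hqdef]
    dsimp only
    split_ifs with h
    · obtain ⟨h1, h2⟩ := h.choose_spec
      exact ⟨h1, lt_of_le_of_lt (le_max_left _ _) h2.1,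
        lt_of_lt_of_le h2.2 (min_le_left _ _)⟩
    · exact ⟨hx₀P, hx₀I⟩
  have hqd : ∀ u v : ℝ, a ≤ u → v ≤ b → u < v → ∃ k, q k ∈ Ioo u v := by
    intro u v hu hv huv
    obtain ⟨r, hr1, hr2⟩ := exists_rat_btwn huv
    obtain ⟨r', hs1, hs2⟩ := exists_rat_btwn hr2
    obtain ⟨k, hk⟩ := he (r, r')
    have h1 : (((e k).1 : ℚ) : ℝ) = (r : ℝ) := by rw [hk]
    have h2 : (((e k).2 : ℚ) : ℝ) = (r' : ℝ) := by rw [hk]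
    have hmax : max a (((e k).1 : ℚ) : ℝ) = (r : ℝ) := by
      rw [h1]; exact max_eq_right (le_of_lt (lt_of_le_of_lt hu hr1))
    have hmin : min b (((e k).2 : ℚ) : ℝ) = (r' : ℝ) := by
      rw [h2]; exact min_eq_right (le_of_lt (lt_of_lt_of_le hs2 hv))
    have hne : (Pset ∩ Ioo (max a (((e k).1 : ℚ) : ℝ)) (min b (((e k).2 : ℚ) : ℝ))).Nonempty := by
      rw [hmax, hmin]
      exact hpick _ _ (le_of_lt (lt_of_le_of_lt hu hr1)) (le_of_lt (lt_of_lt_of_le hs2 hv)) hs1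
    refine ⟨k, ?_⟩
    have hqk : q k ∈ Pset ∩ Ioo (max a (((e k).1 : ℚ) : ℝ)) (min b (((e k).2 : ℚ) : ℝ)) := by
      rw [hqdef]
      dsimp only
      rw [dif_pos hne]
      exact hne.choose_spec
    have := hqk.2
    rw [hmax, hmin] at this
    exact ⟨lt_trans hr1 this.1, lt_trans this.2 hs2⟩
  -- the approximating selections
  set v0 : Fin Q → EuclideanSpace ℝ (Fin n) := f (q 0) with hv0
  set tsL : ℕ → List ℝ := fun k => ((Finset.range (k+1)).image q).sort (· ≤ ·) with htsL
  set Fseq : ℕ → ℝ → Fin Q → EuclideanSpace ℝ (Fin n) :=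
    fun k => pl W (nodes f v0 (tsL k)) with hFseqdef
  have htsmem : ∀ k t, t ∈ tsL k → t ∈ Pset ∧ t ∈ Ioo a b := by
    intro k t ht
    rw [htsL] at ht
    simp only [Finset.mem_sort, Finset.mem_image, Finset.mem_range] at ht
    obtain ⟨m, _, rfl⟩ := ht
    exact hqP m
  have hchain : ∀ k, List.Chain' (Rel W) (nodes f v0 (tsL k)) := by
    intro k
    apply nodes_chain ((List.sortedLT_iff_isChain.1 (Finset.sortedLT_sort _)))
    intro s hs t ht hst
    obtain ⟨hsP, hsI⟩ := htsmem k s hs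
    obtain ⟨htP, htI⟩ := htsmem k t ht
    exact hA s t hsP (Ioo_subset_Icc_self hsI) htP (Ioo_subset_Icc_self htI) hst
  have hFdst : ∀ k, ∀ x y : ℝ, x ≤ y → Dst (Fseq k x) (Fseq k y) ≤ W y - W x :=
    fun k => pl_dst hWmono (hchain k)
  have hFnode : ∀ k m, m ≤ k → ∃ σ : Equiv.Perm (Fin Q), Fseq k (q m) = (f (q m)) ∘ ⇑σ := by
    intro k m hm
    have hmem : q m ∈ tsL k := by
      rw [htsL]
      simp only [Finset.mem_sort, Finset.mem_image, Finset.mem_range]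
      exact ⟨m, Nat.lt_succ_of_le hm, rfl⟩
    obtain ⟨w, hwmem, σ, hσ⟩ := mem_nodes (f := f) hmem v0
    exact ⟨σ, by rw [hFseqdef]; dsimp only; rw [pl_node hWmono (hchain k) hwmem, hσ]⟩
  have hq0I : q 0 ∈ Icc a b := Ioo_subset_Icc_self (hqP 0).2
  set R : ℝ := Dst (f (q 0)) 0 + (W b - W a) with hRdef
  have hbd : ∀ k, ∀ x ∈ Icc a b, ∀ i, ‖Fseq k x i‖ ≤ R := by
    intro k x hx i
    obtain ⟨σ, hσ⟩ := hFnode k 0 (Nat.zero_le k)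
    have h1 : ‖Fseq k x i - Fseq k (q 0) i‖ ≤ W b - W a := by
      have hWax := hWmono hx.1
      have hWxb := hWmono hx.2
      have hWaq := hWmono hq0I.1
      have hWqb := hWmono hq0I.2
      rcases le_total x (q 0) with h | h
      · have := (norm_le_dst (Fseq k x) (Fseq k (q 0)) i).trans (hFdst k x (q 0) h)
        linarith
      · have := (norm_le_dst (Fseq k (q 0)) (Fseq k x) i).trans (hFdst k (q 0) x h)
        rw [norm_sub_rev]
        linarith
    have h2 : ‖Fseq k (q 0) i‖ ≤ Dst (f (q 0)) 0 := by
      rw [hσ]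
      have := norm_le_dst (f (q 0)) 0 (σ i)
      simpa using this
    calc ‖Fseq k x i‖ = ‖(Fseq k x i - Fseq k (q 0) i) + Fseq k (q 0) i‖ := by
          rw [sub_add_cancel]
      _ ≤ ‖Fseq k x i - Fseq k (q 0) i‖ + ‖Fseq k (q 0) i‖ := norm_add_le _ _
      _ ≤ R := by rw [hRdef]; linarith
  -- ultrafilter limit
  set U : Ultrafilter ℕ := Ultrafilter.of Filter.atTop with hUdef
  have hUle : (U : Filter ℕ) ≤ Filter.atTop := Ultrafilter.of_le _
  have hlim : ∀ x : ℝ, ∀ i : Fin Q, ∃ y : EuclideanSpace ℝ (Fin n),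
      x ∈ Icc a b → Filter.Tendsto (fun k => Fseq k x i) U (nhds y) := by
    intro x i
    by_cases hx : x ∈ Icc a b
    · have hcpt : IsCompact (Metric.closedBall (0 : EuclideanSpace ℝ (Fin n)) R) :=
        isCompact_closedBall _ _
    -- the sequence lives in the ball
      have hle : (U.map (fun k => Fseq k x i) : Filter (EuclideanSpace ℝ (Fin n)))
          ≤ Filter.principal (Metric.closedBall 0 R) := by
        refine Filter.le_principal_iff.2 ?_
        refine Filter.mem_map.2 (Filter.univ_mem' fun k => ?_)
        exact mem_closedBall_zero_iff.2 (hbd k x hx i)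
      obtain ⟨y, _, hy⟩ := hcpt.ultrafilter_le_nhds (U.map _) hle
      exact ⟨y, fun _ => hy⟩
    · exact ⟨0, fun h => absurd h hx⟩
  choose FF hFF using hlim
  have hFt : ∀ x ∈ Icc a b, ∀ i, Filter.Tendsto (fun k => Fseq k x i) U (nhds (FF x i)) :=
    fun x hx i => hFF x i hx
  have hDlim : ∀ x ∈ Icc a b, ∀ y ∈ Icc a b, x ≤ y →
      Dst (fun i => FF x i) (fun i => FF y i) ≤ W y - W x := by
    intro x hx y hy hxy
    have htd : Filter.Tendsto (fun k => Dst (Fseq k x) (Fseq k y)) U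
        (nhds (Dst (fun i => FF x i) (fun i => FF y i))) := by
      unfold Dst
      exact (Real.continuous_sqrt.tendsto _).comp (tendsto_finset_sum _ fun i _ =>
        (((hFt x hx i).sub (hFt y hy i)).norm.pow 2))
    exact le_of_tendsto htd (Filter.Eventually.of_forall fun k => hFdst k x y hxy)
  have hnode : ∀ m, GDist (f (q m)) (fun i => FF (q m) i) = 0 := by
    intro m
    have hqmI : q m ∈ Icc a b := Ioo_subset_Icc_self (hqP m).2
    have hclosed : IsClosed (Set.range (fun σ : Equiv.Perm (Fin Q) => (f (q m)) ∘ ⇑σ)) :=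
      (Set.finite_range _).isClosed
    have hev : ∀ᶠ k in (U : Filter ℕ),
        Fseq k (q m) ∈ Set.range (fun σ : Equiv.Perm (Fin Q) => (f (q m)) ∘ ⇑σ) := by
      apply Filter.Eventually.filter_mono hUle
      filter_upwards [Filter.eventually_ge_atTop m] with k hk
      obtain ⟨σ, hσ⟩ := hFnode k m hk
      exact ⟨σ, hσ.symm⟩
    have htt : Filter.Tendsto (fun k => Fseq k (q m)) U (nhds (fun i => FF (q m) i)) :=
      tendsto_pi_nhds.2 fun i => hFt (q m) hqmI i
    obtain ⟨σ, hσ⟩ := hclosed.mem_of_tendsto htt hev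
    rw [← hσ]
    exact gdist_perm_self _ σ
  -- main conclusions
  refine ⟨fun i x => FF x i, ?_, ?_, ?_, ?_⟩
  · -- a.e. representative
    filter_upwards [hPae, ae_restrict_mem measurableSet_Icc] with x hxP hxI
    have key : ∀ ε : ℝ, 0 < ε → GDist (f x) (fun i => FF x i) ≤ ε := by
      intro ε hε
      obtain ⟨δ, hδpos, hδ⟩ := Metric.continuousAt_iff.1 hWcont.continuousAt (ε / 3)
        (by linarith)
      have hu'v' : max a (x - δ) < min b (x + δ) := by
        have h1 : a < x + δ := lt_of_le_of_lt hxI.1 (lt_add_of_pos_right x hδpos)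
        have h2 : x - δ < b := lt_of_lt_of_le (sub_lt_self x hδpos) hxI.2
        exact max_lt (lt_min hab h1) (lt_min h2 (by linarith))
      obtain ⟨k, hk⟩ := hqd _ _ (le_max_left a _) (min_le_left b _) hu'v'
      have hqkP := (hqP k).1
      have hqkI : q k ∈ Icc a b := Ioo_subset_Icc_self (hqP k).2
      have hdist : dist (q k) x < δ := by
        rw [Real.dist_eq, abs_sub_lt_iff]
        have h1 := le_max_right a (x - δ)
        have h2 := min_le_right b (x + δ)
        constructor <;> [linarith [hk.2]; linarith [hk.1]]
      have hWd : |W (q k) - W x| < ε / 3 := by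
        have := hδ hdist
        rwa [Real.dist_eq] at this
      have t1 : GDist (f x) (f (q k)) ≤ |W (q k) - W x| := by
        rcases le_total x (q k) with h | h
        · exact (hA x (q k) hxP hxI hqkP hqkI h).trans (le_abs_self _)
        · rw [gdist_comm]
          refine (hA (q k) x hqkP hqkI hxP hxI h).trans ?_
          rw [abs_sub_comm]
          exact le_abs_self _
      have t3 : GDist (fun i => FF (q k) i) (fun i => FF x i) ≤ |W (q k) - W x| := by
        rcases le_total x (q k) with h | h
        · rw [gdist_comm]
          exact (gdist_le_dst_id _ _).trans ((hDlim x hxI (q k) hqkI h).trans (le_abs_self _))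
        · refine (gdist_le_dst_id _ _).trans ((hDlim (q k) hqkI x hxI h).trans ?_)
          rw [abs_sub_comm]
          exact le_abs_self _
      calc GDist (f x) (fun i => FF x i)
          ≤ GDist (f x) (f (q k)) + GDist (f (q k)) (fun i => FF x i) := gdist_triangle _ _ _
        _ ≤ GDist (f x) (f (q k)) + (GDist (f (q k)) (fun i => FF (q k) i)
            + GDist (fun i => FF (q k) i) (fun i => FF x i)) := by
              have := gdist_triangle (f (q k)) (fun i => FF (q k) i) (fun i => FF x i)
              linarith
        _ ≤ ε / 3 + (0 + ε / 3) := by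
              rw [hnode k]
              have h1 : GDist (f x) (f (q k)) ≤ ε / 3 := t1.trans hWd.le
              have h3 : GDist (fun i => FF (q k) i) (fun i => FF x i) ≤ ε / 3 := t3.trans hWd.le
              linarith
        _ ≤ ε := by linarith
    have h0 : GDist (f x) (fun i => FF x i) ≤ 0 := by
      by_contra hcon
      push_neg at hcon
      have := key (GDist (f x) (fun i => FF x i) / 2) (by linarith)
      linarith
    exact le_antisymm h0 (gdist_nonneg _ _)
  · -- modulus of continuity for GDist
    intro x hx y hy hxy
    rw [← hWsub x hx y hy hxy]
    exact (gdist_le_dst_id _ _).trans (hDlim x hx y hy hxy)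
  · -- modulus of continuity for the strands
    intro i x hx y hy hxy
    rw [← hWsub x hx y hy hxy]
    calc ‖FF y i - FF x i‖ = ‖FF x i - FF y i‖ := norm_sub_rev _ _
      _ ≤ Dst (fun i => FF x i) (fun i => FF y i) := norm_le_dst _ _ i
      _ ≤ W y - W x := hDlim x hx y hy hxy
  · -- Hölder continuity
    intro hp1'
    refine ⟨(eLpNorm g (ENNReal.ofReal p) μ).toReal, ?_⟩
    have hexp : (0:ℝ) ≤ 1 - 1 / p := by
      have : 1 / p ≤ 1 := by
        rw [div_le_one (by linarith)]
        linarith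
      linarith
    have key : ∀ x ∈ Icc a b, ∀ y ∈ Icc a b, x ≤ y →
        GDist (fun i => FF x i) (fun i => FF y i)
          ≤ (eLpNorm g (ENNReal.ofReal p) μ).toReal * (y - x) ^ (1 - 1 / p) := by
      intro x hx y hy hxy
      have hIoc : Ioc x y ⊆ Icc a b := fun t ht =>
        ⟨le_trans hx.1 ht.1.le, le_trans ht.2 hy.2⟩
      have hres : volume.restrict (Ioc x y) ≤ μ := Measure.restrict_mono hIoc le_rfl
      have step1 : GDist (fun i => FF x i) (fun i => FF y i) ≤ ∫ t in x..y, g t := by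
        rw [← hWsub x hx y hy hxy]
        exact (gdist_le_dst_id _ _).trans (hDlim x hx y hy hxy)
      have step2 : ∫ t in x..y, g t
          ≤ (eLpNorm g 1 (volume.restrict (Ioc x y))).toReal := by
        rw [intervalIntegral.integral_of_le hxy, eLpNorm_one_eq_lintegral_enorm]
        refine le_trans (le_abs_self _) ?_
        rw [← Real.norm_eq_abs]
        refine (norm_integral_le_lintegral_norm g).trans (le_of_eq ?_)
        congr 1
        exact lintegral_congr fun t => ofReal_norm_eq_enorm (g t)
      have step3 : eLpNorm g 1 (volume.restrict (Ioc x y))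
          ≤ eLpNorm g (ENNReal.ofReal p) μ * (ENNReal.ofReal (y - x)) ^ (1 - 1 / p) := by
        have hmeas' : AEStronglyMeasurable g (volume.restrict (Ioc x y)) :=
          hgLp.1.mono_measure hres
        have h4 := eLpNorm_le_eLpNorm_mul_rpow_measure_univ (p := 1)
          (q := ENNReal.ofReal p) hp1 hmeas'
        have hμuniv : (volume.restrict (Ioc x y)) Set.univ = ENNReal.ofReal (y - x) := by
          rw [Measure.restrict_apply_univ, Real.volume_Ioc]
        have hexp2 : 1 / (1:ℝ≥0∞).toReal - 1 / (ENNReal.ofReal p).toReal = 1 - 1 / p := by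
          rw [ENNReal.toReal_one, ENNReal.toReal_ofReal (by linarith : (0:ℝ) ≤ p)]
          norm_num
        rw [hμuniv, hexp2] at h4
        refine h4.trans ?_
        exact mul_le_mul_left (eLpNorm_mono_measure g hres) _
      have hne : eLpNorm g (ENNReal.ofReal p) μ * (ENNReal.ofReal (y - x)) ^ (1 - 1 / p)
          ≠ ⊤ := by
        apply ENNReal.mul_ne_top hgLp.2.ne
        exact ENNReal.rpow_ne_top_of_nonneg hexp ENNReal.ofReal_ne_top
      have step4 := (ENNReal.toReal_mono hne step3).trans_eq (by
        rw [ENNReal.toReal_mul, ← ENNReal.toReal_rpow,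
          ENNReal.toReal_ofReal (sub_nonneg.2 hxy)])
      exact step1.trans (step2.trans step4)
    intro x hx y hy
    rcases le_total x y with h | h
    · rw [abs_of_nonneg (sub_nonneg.2 h)]
      exact key x hx y hy h
    · rw [gdist_comm, abs_sub_comm, abs_of_nonneg (sub_nonneg.2 h)]
      exact key y hy x hx h
end
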